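/- arXiv:2410.14908 — 3 statements merged into one kernel-verified Lean document; each statement's English description precedes it below -/
import Mathlib

section
/- Let (A, V, C, R1, R2, R3, E) be two-sided crossed product data over a field k, and let R, σ, P, ν be the maps defined from R1, R2, R3, E as in Theorem 2.1 (R = (R1⊗id_C)∘(id_V⊗R3), σ((v⊗c)⊗(v'⊗c')) = E_A(v, v'_{R2})⊗(E_V(v, v'_{R2})⊗E_C(v, v'_{R2})c_{R2}c'), P = (id_A⊗R2)∘(R3⊗id_V), ν((a⊗v)⊗(a'⊗v')) = (a a'_{R1}E_A(v_{R1}, v')⊗E_V(v_{R1}, v'))⊗E_C(v_{R1}, v')). Then under the canonical identification A⊗(V⊗C) ≅ A⊗V⊗C ≅ (A⊗V)⊗C, the multiplication of the crossed product A⊗_{R,σ}(V⊗C) and the multiplication of the mirror crossed product (A⊗V)⊗̄_{P,ν}C coincide; both send (a⊗v⊗c)⊗(a'⊗v'⊗c') to a(a'_{R3})_{R1} E_A(v_{R1}, v'_{R2}) ⊗ E_V(v_{R1}, v'_{R2}) ⊗ E_C(v_{R1}, v'_{R2})(c_{R3})_{R2} c'. -/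
open TensorProduct LinearMap

set_option maxHeartbeats 1000000
set_option synthInstance.maxHeartbeats 400000

noncomputable section

namespace TwoSidedCP

variable (k : Type*) [Field k]

/-- The associator as a linear map. -/
abbrev α (X Y Z : Type*) [AddCommGroup X] [Module k X] [AddCommGroup Y] [Module k Y]
    [AddCommGroup Z] [Module k Z] :
    (X ⊗[k] Y) ⊗[k] Z →ₗ[k] X ⊗[k] (Y ⊗[k] Z) :=
  (TensorProduct.assoc k X Y Z).toLinearMap

/-- The inverse associator as a linear map. -/
abbrev α' (X Y Z : Type*) [AddCommGroup X] [Module k X] [AddCommGroup Y] [Module k Y]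
    [AddCommGroup Z] [Module k Z] :
    X ⊗[k] (Y ⊗[k] Z) →ₗ[k] (X ⊗[k] Y) ⊗[k] Z :=
  (TensorProduct.assoc k X Y Z).symm.toLinearMap

/-- Multiplication `A ⊗ (A ⊗ V) → A ⊗ V` of the two `A`-factors. -/
def mulAV (A : Type*) [Ring A] [Algebra k A] (V : Type*) [AddCommGroup V] [Module k V] :
    A ⊗[k] (A ⊗[k] V) →ₗ[k] A ⊗[k] V :=
  rTensor V (mul' k A) ∘ₗ α' k A A V

/-- Multiplication `(X ⊗ C) ⊗ C → X ⊗ C` of the two `C`-factors. -/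
def mulXC (X : Type*) [AddCommGroup X] [Module k X] (C : Type*) [Ring C] [Algebra k C] :
    (X ⊗[k] C) ⊗[k] C →ₗ[k] X ⊗[k] C :=
  lTensor X (mul' k C) ∘ₗ α k X C C

section TwistingMaps
variable (A B : Type*) [Ring A] [Algebra k A] [Ring B] [Algebra k B]

/-- `R : B ⊗ A → A ⊗ B` is a twisting map between the algebras `A` and `B`:
  in Sweedler notation, `R(b ⊗ 1) = 1 ⊗ b`, `R(1 ⊗ a) = a ⊗ 1`,
  `(aa')_R ⊗ b_R = a_R a'_r ⊗ b_{R_r}` and `a_R ⊗ (bb')_R = a_{R_r} ⊗ b_r b'_R`. -/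
structure IsTwistingMap (R : B ⊗[k] A →ₗ[k] A ⊗[k] B) : Prop where
  unit_left : ∀ a : A, R ((1 : B) ⊗ₜ[k] a) = a ⊗ₜ[k] (1 : B)
  unit_right : ∀ b : B, R (b ⊗ₜ[k] (1 : A)) = (1 : A) ⊗ₜ[k] b
  mul_left : R ∘ₗ lTensor B (mul' k A) ∘ₗ α k B A A
      = rTensor B (mul' k A) ∘ₗ α' k A A B ∘ₗ lTensor A R ∘ₗ α k A B A ∘ₗ rTensor A R
  mul_right : R ∘ₗ rTensor A (mul' k B)
      = lTensor A (mul' k B) ∘ₗ α k A B B ∘ₗ rTensor B R ∘ₗ α' k B A B ∘ₗ lTensor B R ∘ₗ α k B B A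

/-- The multiplication `(a ⊗ b)(a' ⊗ b') = a a'_R ⊗ b_R b'` of the twisted tensor
  product `A ⊗_R B`. -/
def twistMul (R : B ⊗[k] A →ₗ[k] A ⊗[k] B) :
    (A ⊗[k] B) ⊗[k] (A ⊗[k] B) →ₗ[k] A ⊗[k] B :=
  TensorProduct.map (mul' k A) (mul' k B) ∘ₗ α' k A A (B ⊗[k] B) ∘ₗ lTensor A (α k A B B)
    ∘ₗ lTensor A (rTensor B R) ∘ₗ lTensor A (α' k B A B) ∘ₗ α k A B (A ⊗[k] B)

end TwistingMaps

section Brzezinski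
variable (A V : Type*) [Ring A] [Algebra k A] [AddCommGroup V] [Module k V]

/-- The Brzeziński crossed product conditions (brz1)-(brz5) for the data `(A, V, R, σ)`. -/
structure IsBrzData (e : V) (R : V ⊗[k] A →ₗ[k] A ⊗[k] V)
    (σ : V ⊗[k] V →ₗ[k] A ⊗[k] V) : Prop where
  brz1a : ∀ a : A, R (e ⊗ₜ[k] a) = a ⊗ₜ[k] e
  brz1b : ∀ v : V, R (v ⊗ₜ[k] (1 : A)) = (1 : A) ⊗ₜ[k] v
  brz2a : ∀ v : V, σ (e ⊗ₜ[k] v) = (1 : A) ⊗ₜ[k] v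
  brz2b : ∀ v : V, σ (v ⊗ₜ[k] e) = (1 : A) ⊗ₜ[k] v
  brz3 : R ∘ₗ lTensor V (mul' k A) ∘ₗ α k V A A
      = rTensor V (mul' k A) ∘ₗ α' k A A V ∘ₗ lTensor A R ∘ₗ α k A V A ∘ₗ rTensor A R
  brz4 : rTensor V (mul' k A) ∘ₗ α' k A A V ∘ₗ lTensor A σ ∘ₗ α k A V V ∘ₗ rTensor V R
        ∘ₗ α' k V A V ∘ₗ lTensor V σ ∘ₗ α k V V V
      = rTensor V (mul' k A) ∘ₗ α' k A A V ∘ₗ lTensor A σ ∘ₗ α k A V V ∘ₗ rTensor V σ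
  brz5 : rTensor V (mul' k A) ∘ₗ α' k A A V ∘ₗ lTensor A σ ∘ₗ α k A V V ∘ₗ rTensor V R
        ∘ₗ α' k V A V ∘ₗ lTensor V R ∘ₗ α k V V A
      = rTensor V (mul' k A) ∘ₗ α' k A A V ∘ₗ lTensor A R ∘ₗ α k A V A ∘ₗ rTensor A σ

/-- The multiplication `μ_{A⊗V} = (μ₂ ⊗ id_V)∘(id_A ⊗ id_A ⊗ σ)∘(id_A ⊗ R ⊗ id_V)`
  of the Brzeziński crossed product `A ⊗_{R,σ} V`. -/
def brzMul (R : V ⊗[k] A →ₗ[k] A ⊗[k] V) (σ : V ⊗[k] V →ₗ[k] A ⊗[k] V) :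
    (A ⊗[k] V) ⊗[k] (A ⊗[k] V) →ₗ[k] A ⊗[k] V :=
  rTensor V (mul' k A) ∘ₗ α' k A A V ∘ₗ rTensor (A ⊗[k] V) (mul' k A)
    ∘ₗ α' k A A (A ⊗[k] V) ∘ₗ lTensor A (lTensor A σ) ∘ₗ lTensor A (α k A V V)
    ∘ₗ lTensor A (rTensor V R) ∘ₗ lTensor A (α' k V A V) ∘ₗ α k A V (A ⊗[k] V)

end Brzezinski

section Mirror
variable (W B : Type*) [AddCommGroup W] [Module k W] [AddCommGroup B] [Module k B]

/-- The mirror crossed product conditions (mir0)-(mir4) for the data `(W, B, P, ν)`,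
  where the multiplication of `B` is given by `mB` with unit `uB`. -/
structure IsMirrorData (mB : B ⊗[k] B →ₗ[k] B) (uB : B) (e : W)
    (P : B ⊗[k] W →ₗ[k] W ⊗[k] B) (ν : W ⊗[k] W →ₗ[k] W ⊗[k] B) : Prop where
  mir0a : ∀ b : B, P (b ⊗ₜ[k] e) = e ⊗ₜ[k] b
  mir0b : ∀ w : W, P (uB ⊗ₜ[k] w) = w ⊗ₜ[k] uB
  mir1a : ∀ w : W, ν (w ⊗ₜ[k] e) = w ⊗ₜ[k] uB
  mir1b : ∀ w : W, ν (e ⊗ₜ[k] w) = w ⊗ₜ[k] uB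
  mir2 : P ∘ₗ rTensor W mB
      = lTensor W mB ∘ₗ α k W B B ∘ₗ rTensor B P ∘ₗ α' k B W B ∘ₗ lTensor B P ∘ₗ α k B B W
  mir3 : lTensor W mB ∘ₗ α k W B B ∘ₗ rTensor B ν ∘ₗ α' k W W B ∘ₗ lTensor W P
        ∘ₗ α k W B W ∘ₗ rTensor W ν
      = lTensor W mB ∘ₗ α k W B B ∘ₗ rTensor B ν ∘ₗ α' k W W B ∘ₗ lTensor W ν ∘ₗ α k W W W
  mir4 : lTensor W mB ∘ₗ α k W B B ∘ₗ rTensor B ν ∘ₗ α' k W W B ∘ₗ lTensor W P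
        ∘ₗ α k W B W ∘ₗ rTensor W P
      = lTensor W mB ∘ₗ α k W B B ∘ₗ rTensor B P ∘ₗ α' k B W B ∘ₗ lTensor B ν ∘ₗ α k B W W

/-- The multiplication `μ_{W⊗B} = (id_W ⊗ μ₂)∘(ν ⊗ id_B ⊗ id_B)∘(id_W ⊗ P ⊗ id_B)`
  of the mirror crossed product `W ⊗̄_{P,ν} B`. -/
def mirMul (mB : B ⊗[k] B →ₗ[k] B) (P : B ⊗[k] W →ₗ[k] W ⊗[k] B)
    (ν : W ⊗[k] W →ₗ[k] W ⊗[k] B) :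
    (W ⊗[k] B) ⊗[k] (W ⊗[k] B) →ₗ[k] W ⊗[k] B :=
  lTensor W mB ∘ₗ lTensor W (lTensor B mB) ∘ₗ α k W B (B ⊗[k] B)
    ∘ₗ rTensor (B ⊗[k] B) ν ∘ₗ α' k W W (B ⊗[k] B) ∘ₗ lTensor W (α k W B B)
    ∘ₗ lTensor W (rTensor B P) ∘ₗ lTensor W (α' k B W B) ∘ₗ α k W B (W ⊗[k] B)

end Mirror

section TwoSided
variable (A V C : Type*) [Ring A] [Algebra k A] [AddCommGroup V] [Module k V]
  [Ring C] [Algebra k C]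

/-- auxiliary map: multiply the leftover `A`-factor and `C`-factor into `A ⊗ V ⊗ C`. -/
def tsTail : (A ⊗[k] ((A ⊗[k] V) ⊗[k] C)) ⊗[k] C →ₗ[k] (A ⊗[k] V) ⊗[k] C :=
  mulXC k (A ⊗[k] V) C ∘ₗ rTensor C (rTensor C (mulAV k A V) ∘ₗ α' k A (A ⊗[k] V) C)

/-- Two-sided crossed product data `(A, V, C, R1, R2, R3, E)`:
  conditions (i)-(v) of Theorem 2.1 of the paper. -/
structure IsTwoSidedData (e : V) (R1 : V ⊗[k] A →ₗ[k] A ⊗[k] V)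
    (R2 : C ⊗[k] V →ₗ[k] V ⊗[k] C) (R3 : C ⊗[k] A →ₗ[k] A ⊗[k] C)
    (E : V ⊗[k] V →ₗ[k] (A ⊗[k] V) ⊗[k] C) : Prop where
  twist : IsTwistingMap k A C R3
  r1a : ∀ a : A, R1 (e ⊗ₜ[k] a) = a ⊗ₜ[k] e
  r1b : ∀ v : V, R1 (v ⊗ₜ[k] (1 : A)) = (1 : A) ⊗ₜ[k] v
  r2a : ∀ c : C, R2 (c ⊗ₜ[k] e) = e ⊗ₜ[k] c
  r2b : ∀ v : V, R2 ((1 : C) ⊗ₜ[k] v) = v ⊗ₜ[k] (1 : C)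
  ea : ∀ v : V, E (e ⊗ₜ[k] v) = ((1 : A) ⊗ₜ[k] v) ⊗ₜ[k] (1 : C)
  eb : ∀ v : V, E (v ⊗ₜ[k] e) = ((1 : A) ⊗ₜ[k] v) ⊗ₜ[k] (1 : C)
  eq1 : R1 ∘ₗ lTensor V (mul' k A) ∘ₗ α k V A A
      = rTensor V (mul' k A) ∘ₗ α' k A A V ∘ₗ lTensor A R1 ∘ₗ α k A V A ∘ₗ rTensor A R1
  eq2 : R2 ∘ₗ rTensor V (mul' k C)
      = lTensor V (mul' k C) ∘ₗ α k V C C ∘ₗ rTensor C R2 ∘ₗ α' k C V C ∘ₗ lTensor C R2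
        ∘ₗ α k C C V
  eq3 : lTensor A R2 ∘ₗ α k A C V ∘ₗ rTensor V R3 ∘ₗ α' k C A V ∘ₗ lTensor C R1
      = α k A V C ∘ₗ rTensor C R1 ∘ₗ α' k V A C ∘ₗ lTensor V R3 ∘ₗ α k V C A
        ∘ₗ rTensor A R2 ∘ₗ α' k C V A
  eq4 : rTensor C (mulAV k A V) ∘ₗ α' k A (A ⊗[k] V) C ∘ₗ lTensor A E ∘ₗ α k A V V
        ∘ₗ rTensor V R1 ∘ₗ α' k V A V ∘ₗ lTensor V R1 ∘ₗ α k V V A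
      = rTensor C (mulAV k A V) ∘ₗ rTensor C (lTensor A R1) ∘ₗ rTensor C (α k A V A)
        ∘ₗ α' k (A ⊗[k] V) A C ∘ₗ lTensor (A ⊗[k] V) R3 ∘ₗ α k (A ⊗[k] V) C A ∘ₗ rTensor A E
  eq5 : mulXC k (A ⊗[k] V) C ∘ₗ rTensor C E ∘ₗ α' k V V C ∘ₗ lTensor V R2
        ∘ₗ α k V C V ∘ₗ rTensor V R2
      = mulXC k (A ⊗[k] V) C ∘ₗ rTensor C (α' k A V C) ∘ₗ rTensor C (lTensor A R2)
        ∘ₗ rTensor C (α k A C V) ∘ₗ rTensor C (rTensor V R3) ∘ₗ rTensor C (α' k C A V)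
        ∘ₗ α' k C (A ⊗[k] V) C ∘ₗ lTensor C E ∘ₗ α k C V V
  eq6 : tsTail k A V C ∘ₗ rTensor C (lTensor A E) ∘ₗ rTensor C (α k A V V)
        ∘ₗ rTensor C (rTensor V R1) ∘ₗ rTensor C (α' k V A V)
        ∘ₗ α' k V (A ⊗[k] V) C ∘ₗ lTensor V E ∘ₗ α k V V V
      = tsTail k A V C ∘ₗ rTensor C (lTensor A E) ∘ₗ rTensor C (α k A V V)
        ∘ₗ α' k (A ⊗[k] V) V C ∘ₗ lTensor (A ⊗[k] V) R2 ∘ₗ α k (A ⊗[k] V) C V ∘ₗ rTensor V E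

/-- The map `P = (id_A ⊗ R2)∘(R3 ⊗ id_V) : C ⊗ (A ⊗ V) → (A ⊗ V) ⊗ C`. -/
def tsP (R2 : C ⊗[k] V →ₗ[k] V ⊗[k] C) (R3 : C ⊗[k] A →ₗ[k] A ⊗[k] C) :
    C ⊗[k] (A ⊗[k] V) →ₗ[k] (A ⊗[k] V) ⊗[k] C :=
  α' k A V C ∘ₗ lTensor A R2 ∘ₗ α k A C V ∘ₗ rTensor V R3 ∘ₗ α' k C A V

/-- The map `ν = (μ_A ⊗ id_V ⊗ id_C)∘(μ_A ⊗ E)∘(id_A ⊗ R1 ⊗ id_V)`,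
  `ν((a ⊗ v) ⊗ (a' ⊗ v')) = (a a'_{R1} E_A(v_{R1}, v') ⊗ E_V(v_{R1}, v')) ⊗ E_C(v_{R1}, v')`. -/
def tsNu (R1 : V ⊗[k] A →ₗ[k] A ⊗[k] V) (E : V ⊗[k] V →ₗ[k] (A ⊗[k] V) ⊗[k] C) :
    (A ⊗[k] V) ⊗[k] (A ⊗[k] V) →ₗ[k] (A ⊗[k] V) ⊗[k] C :=
  rTensor C (mulAV k A V) ∘ₗ α' k A (A ⊗[k] V) C ∘ₗ lTensor A (rTensor C (mulAV k A V))
    ∘ₗ lTensor A (α' k A (A ⊗[k] V) C) ∘ₗ lTensor A (lTensor A E) ∘ₗ lTensor A (α k A V V)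
    ∘ₗ lTensor A (rTensor V R1) ∘ₗ lTensor A (α' k V A V) ∘ₗ α k A V (A ⊗[k] V)

/-- The map `R = (R1 ⊗ id_C)∘(id_V ⊗ R3) : (V ⊗ C) ⊗ A → A ⊗ (V ⊗ C)`. -/
def tsR (R1 : V ⊗[k] A →ₗ[k] A ⊗[k] V) (R3 : C ⊗[k] A →ₗ[k] A ⊗[k] C) :
    (V ⊗[k] C) ⊗[k] A →ₗ[k] A ⊗[k] (V ⊗[k] C) :=
  α k A V C ∘ₗ rTensor C R1 ∘ₗ α' k V A C ∘ₗ lTensor V R3 ∘ₗ α k V C A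

/-- The map `σ = (id_A ⊗ id_V ⊗ μ_C)∘(E ⊗ μ_C)∘(id_V ⊗ R2 ⊗ id_C)`,
  `σ((v ⊗ c) ⊗ (v' ⊗ c')) = E_A(v, v'_{R2}) ⊗ (E_V(v, v'_{R2}) ⊗ E_C(v, v'_{R2}) c_{R2} c')`. -/
def tsSigma (R2 : C ⊗[k] V →ₗ[k] V ⊗[k] C) (E : V ⊗[k] V →ₗ[k] (A ⊗[k] V) ⊗[k] C) :
    (V ⊗[k] C) ⊗[k] (V ⊗[k] C) →ₗ[k] A ⊗[k] (V ⊗[k] C) :=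
  α k A V C ∘ₗ mulXC k (A ⊗[k] V) C ∘ₗ rTensor C E ∘ₗ α' k V V C
    ∘ₗ lTensor V (lTensor V (mul' k C)) ∘ₗ lTensor V (α k V C C)
    ∘ₗ lTensor V (rTensor C R2) ∘ₗ lTensor V (α' k C V C) ∘ₗ α k V C (V ⊗[k] C)

/-- The multiplication of the two-sided crossed product `A ⋊ V ⋉ C`:
  `(a ⊗ v ⊗ c)(a' ⊗ v' ⊗ c') = a (a'_{R3})_{R1} E_A(v_{R1}, v'_{R2}) ⊗ E_V(v_{R1}, v'_{R2})
    ⊗ E_C(v_{R1}, v'_{R2}) (c_{R3})_{R2} c'`. -/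
def tsMul (R1 : V ⊗[k] A →ₗ[k] A ⊗[k] V) (R2 : C ⊗[k] V →ₗ[k] V ⊗[k] C)
    (R3 : C ⊗[k] A →ₗ[k] A ⊗[k] C) (E : V ⊗[k] V →ₗ[k] (A ⊗[k] V) ⊗[k] C) :
    ((A ⊗[k] V) ⊗[k] C) ⊗[k] ((A ⊗[k] V) ⊗[k] C) →ₗ[k] (A ⊗[k] V) ⊗[k] C :=
  lTensor (A ⊗[k] V) (mul' k C) ∘ₗ α k (A ⊗[k] V) C C
    ∘ₗ rTensor C (tsNu k A V C R1 E) ∘ₗ α' k (A ⊗[k] V) (A ⊗[k] V) C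
    ∘ₗ lTensor (A ⊗[k] V) (lTensor (A ⊗[k] V) (mul' k C))
    ∘ₗ lTensor (A ⊗[k] V) (α k (A ⊗[k] V) C C)
    ∘ₗ lTensor (A ⊗[k] V) (rTensor C (tsP k A V C R2 R3))
    ∘ₗ lTensor (A ⊗[k] V) (α' k C (A ⊗[k] V) C)
    ∘ₗ α k (A ⊗[k] V) C ((A ⊗[k] V) ⊗[k] C)

/-- The canonical linear isomorphism `A ⊗ V ⊗ C ≅ V ⊗ (A ⊗ C)`. -/
def phiVAC : ((A ⊗[k] V) ⊗[k] C) ≃ₗ[k] V ⊗[k] (A ⊗[k] C) :=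
  (TensorProduct.congr (TensorProduct.comm k A V) (LinearEquiv.refl k C)).trans
    (TensorProduct.assoc k V A C)

end TwoSided

section Iterated
variable (A B C : Type*) [Ring A] [Algebra k A] [Ring B] [Algebra k B] [Ring C] [Algebra k C]

/-- The multiplication of the iterated twisted tensor product:
  `(a ⊗ b ⊗ c)(a' ⊗ b' ⊗ c') = a (a'_{R3})_{R1} ⊗ b_{R1} b'_{R2} ⊗ (c_{R3})_{R2} c'`. -/
def iterMul (R1 : B ⊗[k] A →ₗ[k] A ⊗[k] B) (R2 : C ⊗[k] B →ₗ[k] B ⊗[k] C)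
    (R3 : C ⊗[k] A →ₗ[k] A ⊗[k] C) :
    ((A ⊗[k] B) ⊗[k] C) ⊗[k] ((A ⊗[k] B) ⊗[k] C) →ₗ[k] (A ⊗[k] B) ⊗[k] C :=
  rTensor C (twistMul k A B R1) ∘ₗ α' k (A ⊗[k] B) (A ⊗[k] B) C
    ∘ₗ lTensor (A ⊗[k] B) (lTensor (A ⊗[k] B) (mul' k C))
    ∘ₗ lTensor (A ⊗[k] B) (α k (A ⊗[k] B) C C)
    ∘ₗ lTensor (A ⊗[k] B) (rTensor C (tsP k A B C R2 R3))
    ∘ₗ lTensor (A ⊗[k] B) (α' k C (A ⊗[k] B) C)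
    ∘ₗ α k (A ⊗[k] B) C ((A ⊗[k] B) ⊗[k] C)

end Iterated

set_option maxHeartbeats 4000000 in
theorem aux_part1
    (A V C : Type*) [Ring A] [Algebra k A] [AddCommGroup V] [Module k V]
    [Ring C] [Algebra k C]
    (R1 : V ⊗[k] A →ₗ[k] A ⊗[k] V) (R2 : C ⊗[k] V →ₗ[k] V ⊗[k] C)
    (R3 : C ⊗[k] A →ₗ[k] A ⊗[k] C) (E : V ⊗[k] V →ₗ[k] (A ⊗[k] V) ⊗[k] C) :
    brzMul k A (V ⊗[k] C) (tsR k A V C R1 R3) (tsSigma k A V C R2 E)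
      = α k A V C ∘ₗ tsMul k A V C R1 R2 R3 E
        ∘ₗ TensorProduct.map (α' k A V C) (α' k A V C) := by
  unfold brzMul tsSigma tsR tsMul tsNu tsP mulAV mulXC
  ext a v c a' v' c'
  simp only [coe_comp, Function.comp_apply, LinearEquiv.coe_coe, TensorProduct.assoc_tmul,
    TensorProduct.assoc_symm_tmul, lTensor_tmul, rTensor_tmul, mul'_apply, TensorProduct.map_tmul,
    AlgebraTensorModule.curry_apply, curry_apply, coe_restrictScalars, TensorProduct.mk_apply,
    LinearMap.rTensor_comp, LinearMap.lTensor_comp, LinearMap.mulLeft_apply, LinearMap.mulRight_apply]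
  generalize R3 (c ⊗ₜ[k] a') = x
  induction x using TensorProduct.induction_on with
  | zero => simp
  | add p q hp hq => simp only [map_add, add_tmul, tmul_add, hp, hq]
  | tmul a1 c1 =>
    simp only [coe_comp, Function.comp_apply, LinearEquiv.coe_coe, TensorProduct.assoc_tmul,
    TensorProduct.assoc_symm_tmul, lTensor_tmul, rTensor_tmul, mul'_apply, TensorProduct.map_tmul,
    AlgebraTensorModule.curry_apply, curry_apply, coe_restrictScalars, TensorProduct.mk_apply,
    LinearMap.rTensor_comp, LinearMap.lTensor_comp, LinearMap.mulLeft_apply, LinearMap.mulRight_apply]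
    trans (TensorProduct.assoc k A V C)
      ((rTensor C (rTensor V (LinearMap.mulLeft k a)))
        ((lTensor (A ⊗[k] V) (LinearMap.mulRight k c'))
          ((rTensor C (rTensor V (mul' k A) ∘ₗ α' k A A V)
            ∘ₗ α' k A (A ⊗[k] V) C
            ∘ₗ lTensor A (lTensor (A ⊗[k] V) (mul' k C) ∘ₗ α k (A ⊗[k] V) C C)
            ∘ₗ lTensor A (rTensor C E)
            ∘ₗ lTensor A (α' k V V C)
            ∘ₗ α k A V (V ⊗[k] C))
            (R1 (v ⊗ₜ[k] a1) ⊗ₜ[k] R2 (c1 ⊗ₜ[k] v')))))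
    · -- brz side = α (Mid)
      simp only [coe_comp, Function.comp_apply, LinearEquiv.coe_coe, TensorProduct.assoc_tmul,
    TensorProduct.assoc_symm_tmul, lTensor_tmul, rTensor_tmul, mul'_apply, TensorProduct.map_tmul,
    AlgebraTensorModule.curry_apply, curry_apply, coe_restrictScalars, TensorProduct.mk_apply,
    LinearMap.rTensor_comp, LinearMap.lTensor_comp, LinearMap.mulLeft_apply, LinearMap.mulRight_apply]
      generalize R1 (v ⊗ₜ[k] a1) = y
      induction y using TensorProduct.induction_on with
      | zero => simp
      | add p q hp hq => simp only [map_add, add_tmul, tmul_add, hp, hq]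
      | tmul a2 v2 =>
        simp only [coe_comp, Function.comp_apply, LinearEquiv.coe_coe, TensorProduct.assoc_tmul,
    TensorProduct.assoc_symm_tmul, lTensor_tmul, rTensor_tmul, mul'_apply, TensorProduct.map_tmul,
    AlgebraTensorModule.curry_apply, curry_apply, coe_restrictScalars, TensorProduct.mk_apply,
    LinearMap.rTensor_comp, LinearMap.lTensor_comp, LinearMap.mulLeft_apply, LinearMap.mulRight_apply]
        generalize R2 (c1 ⊗ₜ[k] v') = z
        induction z using TensorProduct.induction_on with
        | zero => simp
        | add p q hp hq => simp only [map_add, add_tmul, tmul_add, hp, hq]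
        | tmul v3 c3 =>
          simp only [coe_comp, Function.comp_apply, LinearEquiv.coe_coe, TensorProduct.assoc_tmul,
    TensorProduct.assoc_symm_tmul, lTensor_tmul, rTensor_tmul, mul'_apply, TensorProduct.map_tmul,
    AlgebraTensorModule.curry_apply, curry_apply, coe_restrictScalars, TensorProduct.mk_apply,
    LinearMap.rTensor_comp, LinearMap.lTensor_comp, LinearMap.mulLeft_apply, LinearMap.mulRight_apply]
          generalize E (v2 ⊗ₜ[k] v3) = u
          induction u using TensorProduct.induction_on with
          | zero => simp
          | add p q hp hq => simp only [map_add, add_tmul, tmul_add, hp, hq]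
          | tmul av c4 =>
            induction av using TensorProduct.induction_on with
            | zero => simp
            | add p q hp hq => simp only [map_add, add_tmul, tmul_add, hp, hq]
            | tmul a3 v4 =>
              simp only [coe_comp, Function.comp_apply, LinearEquiv.coe_coe, TensorProduct.assoc_tmul,
    TensorProduct.assoc_symm_tmul, lTensor_tmul, rTensor_tmul, mul'_apply, TensorProduct.map_tmul,
    AlgebraTensorModule.curry_apply, curry_apply, coe_restrictScalars, TensorProduct.mk_apply,
    LinearMap.rTensor_comp, LinearMap.lTensor_comp, LinearMap.mulLeft_apply, LinearMap.mulRight_apply, mul_assoc]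
    · -- α (Mid) = ts side
      refine congrArg (⇑(TensorProduct.assoc k A V C)) ?_
      simp only [coe_comp, Function.comp_apply, LinearEquiv.coe_coe, TensorProduct.assoc_tmul,
    TensorProduct.assoc_symm_tmul, lTensor_tmul, rTensor_tmul, mul'_apply, TensorProduct.map_tmul,
    AlgebraTensorModule.curry_apply, curry_apply, coe_restrictScalars, TensorProduct.mk_apply,
    LinearMap.rTensor_comp, LinearMap.lTensor_comp, LinearMap.mulLeft_apply, LinearMap.mulRight_apply]
      generalize R2 (c1 ⊗ₜ[k] v') = z
      induction z using TensorProduct.induction_on with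
      | zero => simp
      | add p q hp hq => simp only [map_add, add_tmul, tmul_add, hp, hq]
      | tmul v3 c3 =>
        simp only [coe_comp, Function.comp_apply, LinearEquiv.coe_coe, TensorProduct.assoc_tmul,
    TensorProduct.assoc_symm_tmul, lTensor_tmul, rTensor_tmul, mul'_apply, TensorProduct.map_tmul,
    AlgebraTensorModule.curry_apply, curry_apply, coe_restrictScalars, TensorProduct.mk_apply,
    LinearMap.rTensor_comp, LinearMap.lTensor_comp, LinearMap.mulLeft_apply, LinearMap.mulRight_apply]
        generalize R1 (v ⊗ₜ[k] a1) = y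
        induction y using TensorProduct.induction_on with
        | zero => simp
        | add p q hp hq => simp only [map_add, add_tmul, tmul_add, hp, hq]
        | tmul a2 v2 =>
          simp only [coe_comp, Function.comp_apply, LinearEquiv.coe_coe, TensorProduct.assoc_tmul,
    TensorProduct.assoc_symm_tmul, lTensor_tmul, rTensor_tmul, mul'_apply, TensorProduct.map_tmul,
    AlgebraTensorModule.curry_apply, curry_apply, coe_restrictScalars, TensorProduct.mk_apply,
    LinearMap.rTensor_comp, LinearMap.lTensor_comp, LinearMap.mulLeft_apply, LinearMap.mulRight_apply]
          generalize E (v2 ⊗ₜ[k] v3) = u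
          induction u using TensorProduct.induction_on with
          | zero => simp
          | add p q hp hq => simp only [map_add, add_tmul, tmul_add, hp, hq]
          | tmul av c4 =>
            induction av using TensorProduct.induction_on with
            | zero => simp
            | add p q hp hq => simp only [map_add, add_tmul, tmul_add, hp, hq]
            | tmul a3 v4 =>
              simp only [coe_comp, Function.comp_apply, LinearEquiv.coe_coe, TensorProduct.assoc_tmul,
    TensorProduct.assoc_symm_tmul, lTensor_tmul, rTensor_tmul, mul'_apply, TensorProduct.map_tmul,
    AlgebraTensorModule.curry_apply, curry_apply, coe_restrictScalars, TensorProduct.mk_apply,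
    LinearMap.rTensor_comp, LinearMap.lTensor_comp, LinearMap.mulLeft_apply, LinearMap.mulRight_apply, mul_assoc]

set_option maxHeartbeats 4000000 in
theorem aux_part2
    (A V C : Type*) [Ring A] [Algebra k A] [AddCommGroup V] [Module k V]
    [Ring C] [Algebra k C]
    (R1 : V ⊗[k] A →ₗ[k] A ⊗[k] V) (R2 : C ⊗[k] V →ₗ[k] V ⊗[k] C)
    (R3 : C ⊗[k] A →ₗ[k] A ⊗[k] C) (E : V ⊗[k] V →ₗ[k] (A ⊗[k] V) ⊗[k] C) :
    mirMul k (A ⊗[k] V) C (mul' k C) (tsP k A V C R2 R3) (tsNu k A V C R1 E)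
      = tsMul k A V C R1 R2 R3 E := by
  unfold mirMul tsMul tsP tsNu mulAV
  ext a v c a' v' c'
  simp only [coe_comp, Function.comp_apply, LinearEquiv.coe_coe, TensorProduct.assoc_tmul,
    TensorProduct.assoc_symm_tmul, lTensor_tmul, rTensor_tmul, mul'_apply, TensorProduct.map_tmul,
    AlgebraTensorModule.curry_apply, curry_apply, coe_restrictScalars, TensorProduct.mk_apply,
    LinearMap.rTensor_comp, LinearMap.lTensor_comp]
  generalize R3 (c ⊗ₜ[k] a') = x
  induction x using TensorProduct.induction_on with
  | zero => simp
  | add p q hp hq =>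
      simp only [map_add, add_tmul, tmul_add, hp, hq]
  | tmul a1 c1 =>
      simp only [coe_comp, Function.comp_apply, LinearEquiv.coe_coe, TensorProduct.assoc_tmul,
    TensorProduct.assoc_symm_tmul, lTensor_tmul, rTensor_tmul, mul'_apply, TensorProduct.map_tmul,
    AlgebraTensorModule.curry_apply, curry_apply, coe_restrictScalars, TensorProduct.mk_apply,
    LinearMap.rTensor_comp, LinearMap.lTensor_comp]
      generalize R2 (c1 ⊗ₜ[k] v') = z
      induction z using TensorProduct.induction_on with
      | zero => simp
      | add p q hp hq => simp only [map_add, add_tmul, tmul_add, hp, hq]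
      | tmul v3 c3 =>
          simp only [coe_comp, Function.comp_apply, LinearEquiv.coe_coe, TensorProduct.assoc_tmul,
    TensorProduct.assoc_symm_tmul, lTensor_tmul, rTensor_tmul, mul'_apply, TensorProduct.map_tmul,
    AlgebraTensorModule.curry_apply, curry_apply, coe_restrictScalars, TensorProduct.mk_apply,
    LinearMap.rTensor_comp, LinearMap.lTensor_comp]
          generalize R1 (v ⊗ₜ[k] a1) = y
          induction y using TensorProduct.induction_on with
          | zero => simp
          | add p q hp hq => simp only [map_add, add_tmul, tmul_add, hp, hq]
          | tmul a2 v2 =>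
              simp only [coe_comp, Function.comp_apply, LinearEquiv.coe_coe, TensorProduct.assoc_tmul,
    TensorProduct.assoc_symm_tmul, lTensor_tmul, rTensor_tmul, mul'_apply, TensorProduct.map_tmul,
    AlgebraTensorModule.curry_apply, curry_apply, coe_restrictScalars, TensorProduct.mk_apply,
    LinearMap.rTensor_comp, LinearMap.lTensor_comp]
              generalize E (v2 ⊗ₜ[k] v3) = u
              induction u using TensorProduct.induction_on with
              | zero => simp
              | add p q hp hq => simp only [map_add, add_tmul, tmul_add, hp, hq]
              | tmul av c4 =>
                  induction av using TensorProduct.induction_on with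
                  | zero => simp
                  | add p q hp hq => simp only [map_add, add_tmul, tmul_add, hp, hq]
                  | tmul a3 v4 =>
                      simp only [coe_comp, Function.comp_apply, LinearEquiv.coe_coe, TensorProduct.assoc_tmul,
    TensorProduct.assoc_symm_tmul, lTensor_tmul, rTensor_tmul, mul'_apply, TensorProduct.map_tmul,
    AlgebraTensorModule.curry_apply, curry_apply, coe_restrictScalars, TensorProduct.mk_apply,
    LinearMap.rTensor_comp, LinearMap.lTensor_comp]


/-- under the canonical identification `A ⊗ (V ⊗ C) ≅ A ⊗ V ⊗ C ≅ (A ⊗ V) ⊗ C`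
the multiplications of the crossed product `A ⊗_{R,σ} (V ⊗ C)` and of the mirror crossed
product `(A ⊗ V) ⊗̄_{P,ν} C` coincide, both being given by the two-sided crossed product
multiplication `(a ⊗ v ⊗ c)(a' ⊗ v' ⊗ c') = a (a'_{R3})_{R1} E_A(v_{R1}, v'_{R2})
⊗ E_V(v_{R1}, v'_{R2}) ⊗ E_C(v_{R1}, v'_{R2}) (c_{R3})_{R2} c'`. -/
theorem crossed_product_multiplications_coincide
    (A V C : Type*) [Ring A] [Algebra k A] [AddCommGroup V] [Module k V]
    [Ring C] [Algebra k C] (e : V) (he : e ≠ 0)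
    (R1 : V ⊗[k] A →ₗ[k] A ⊗[k] V) (R2 : C ⊗[k] V →ₗ[k] V ⊗[k] C)
    (R3 : C ⊗[k] A →ₗ[k] A ⊗[k] C) (E : V ⊗[k] V →ₗ[k] (A ⊗[k] V) ⊗[k] C)
    (h : IsTwoSidedData k A V C e R1 R2 R3 E) :
    brzMul k A (V ⊗[k] C) (tsR k A V C R1 R3) (tsSigma k A V C R2 E)
      = α k A V C ∘ₗ tsMul k A V C R1 R2 R3 E
        ∘ₗ TensorProduct.map (α' k A V C) (α' k A V C) ∧
    mirMul k (A ⊗[k] V) C (mul' k C) (tsP k A V C R2 R3) (tsNu k A V C R1 E)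
      = tsMul k A V C R1 R2 R3 E := by
  exact ⟨aux_part1 k A V C R1 R2 R3 E, aux_part2 k A V C R1 R2 R3 E⟩
end TwoSidedCP
end
end

section
/- Let (A, V, C, R1, R2, R3, E) be two-sided crossed product data over a field k. Define R = (R1⊗id_C)∘(id_V⊗R3): (V⊗C)⊗A → A⊗(V⊗C) and σ: (V⊗C)⊗(V⊗C) → A⊗(V⊗C), σ((v⊗c)⊗(v'⊗c')) = E_A(v, v'_{R2})⊗(E_V(v, v'_{R2})⊗E_C(v, v'_{R2})c_{R2}c'). Then the compatibility condition (brz5) holds: (μ_A⊗id_{V⊗C})∘(id_A⊗σ)∘(R⊗id_{V⊗C})∘(id_{V⊗C}⊗R) = (μ_A⊗id_{V⊗C})∘(id_A⊗R)∘(σ⊗id_A). -/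
open TensorProduct LinearMap

set_option maxHeartbeats 1000000
set_option synthInstance.maxHeartbeats 400000

noncomputable section

namespace TwoSidedCP

variable (k : Type*) [Field k]

/-!
Both sides of (brz5) are composites of `R1, R2, R3, E` and the two multiplications, so the identity
is a string-diagram computation valid in any monoidal category. On the side where `σ` acts first,
the multiplicativity of `R3` lets `a` travel through the product `E_C(v, v'_{R2}) c_{R2} c'` one
factor at a time, and (eq4) then moves `a` past `E` itself. On the other side, (eq3) exchanges
`R2` with `R1` and `R3`. Both sides thereby reach the same normal form; all other steps are
interchanges of independent strings and coherence.

The objects of a monoidal category share one universe, so `A`, `V` and `C` are lifted to a common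
universe and the equations are transported along the lifts.
-/

section StringDiagrams
open CategoryTheory MonoidalCategory

-- `⊗` already denotes `TensorProduct` here.
local infixr:70 " ⊙ " => MonoidalCategoryStruct.tensorObj

variable {M : Type*} [Category M] [MonoidalCategory M] {A V C : M}

theorem twist_mul_mul (n : C ⊙ C ⟶ C) (r3 : C ⊙ A ⟶ A ⊙ C)
    (hr3 : n ▷ A ≫ r3
      = (α_ C C A).hom ≫ C ◁ r3 ≫ (α_ C A C).inv ≫ r3 ▷ C ≫ (α_ A C C).hom ≫ A ◁ n) :
    ((C ◁ n) ≫ n) ▷ A ≫ r3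
      = 𝟙 _ ⊗≫ C ◁ C ◁ r3 ⊗≫ C ◁ r3 ▷ C ⊗≫ r3 ▷ (C ⊙ C) ⊗≫ A ◁ ((C ◁ n) ≫ n) := by
  calc _ = (C ◁ n) ▷ A ⊗≫ C ◁ r3 ⊗≫ r3 ▷ C ⊗≫ A ◁ n := by
        rw [comp_whiskerRight, Category.assoc, hr3]; monoidal
    _ = 𝟙 _ ⊗≫ C ◁ (n ▷ A ≫ r3) ⊗≫ r3 ▷ C ⊗≫ A ◁ n := by monoidal
    _ = 𝟙 _ ⊗≫ C ◁ C ◁ r3 ⊗≫ C ◁ r3 ▷ C ⊗≫ ((C ⊙ A) ◁ n ≫ r3 ▷ C) ⊗≫ A ◁ n := by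
        rw [hr3]; monoidal
    _ = _ := by rw [whisker_exchange]; monoidal

def crossedR (r1 : V ⊙ A ⟶ A ⊙ V) (r3 : C ⊙ A ⟶ A ⊙ C) : (V ⊙ C) ⊙ A ⟶ A ⊙ (V ⊙ C) :=
  (α_ V C A).hom ≫ V ◁ r3 ≫ (α_ V A C).inv ≫ r1 ▷ C ≫ (α_ A V C).hom

def crossedSigma (n : C ⊙ C ⟶ C) (r2 : C ⊙ V ⟶ V ⊙ C) (ee : V ⊙ V ⟶ (A ⊙ V) ⊙ C) :
    (V ⊙ C) ⊙ (V ⊙ C) ⟶ A ⊙ (V ⊙ C) :=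
  (α_ V C (V ⊙ C)).hom ≫ V ◁ (α_ C V C).inv ≫ V ◁ (r2 ▷ C) ≫ V ◁ (α_ V C C).hom
    ≫ V ◁ (V ◁ n) ≫ (α_ V V C).inv ≫ ee ▷ C ≫ (α_ (A ⊙ V) C C).hom ≫ (A ⊙ V) ◁ n
    ≫ (α_ A V C).hom

variable (m : A ⊙ A ⟶ A) (n : C ⊙ C ⟶ C) (r1 : V ⊙ A ⟶ A ⊙ V) (r2 : C ⊙ V ⟶ V ⊙ C)
  (r3 : C ⊙ A ⟶ A ⊙ C) (ee : V ⊙ V ⟶ (A ⊙ V) ⊙ C)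

/-- On `v ⊗ c ⊗ v' ⊗ c' ⊗ a`: `r2` acts on `c ⊗ v'`, then `a` travels left through `c'` and
`c_{r2}` by `r3` and through `v'_{r2}` and `v` by `r1`, then `ee` acts, and finally the products
are taken in `A` and in `C`. -/
def brz5NormalForm : ((V ⊙ C) ⊙ (V ⊙ C)) ⊙ A ⟶ A ⊙ (V ⊙ C) :=
  𝟙 _ ⊗≫ V ◁ (r2 ▷ C) ▷ A
    ⊗≫ (V ⊙ V) ◁ ((α_ C C A).hom ≫ C ◁ r3 ≫ (α_ C A C).inv ≫ r3 ▷ C ≫ (α_ A C C).hom)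
    ⊗≫ ((α_ V V A).hom ≫ V ◁ r1 ≫ (α_ V A V).inv ≫ r1 ▷ V ≫ (α_ A V V).hom
      ≫ A ◁ ee ≫ (α_ A (A ⊙ V) C).inv ≫ ((α_ A A V).inv ≫ m ▷ V) ▷ C) ▷ (C ⊙ C)
    ⊗≫ (A ⊙ V) ◁ ((C ◁ n) ≫ n) ⊗≫ 𝟙 _

theorem crossedSigma_whiskerRight_comp_crossedR_eq_brz5NormalForm
    (hr3 : n ▷ A ≫ r3
      = (α_ C C A).hom ≫ C ◁ r3 ≫ (α_ C A C).inv ≫ r3 ▷ C ≫ (α_ A C C).hom ≫ A ◁ n)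
    (heq4 : (α_ V V A).hom ≫ V ◁ r1 ≫ (α_ V A V).inv ≫ r1 ▷ V ≫ (α_ A V V).hom
          ≫ A ◁ ee ≫ (α_ A (A ⊙ V) C).inv ≫ ((α_ A A V).inv ≫ m ▷ V) ▷ C
      = ee ▷ A ≫ (α_ (A ⊙ V) C A).hom ≫ (A ⊙ V) ◁ r3 ≫ (α_ (A ⊙ V) A C).inv
          ≫ (α_ A V A).hom ▷ C ≫ (A ◁ r1) ▷ C ≫ ((α_ A A V).inv ≫ m ▷ V) ▷ C) :
    crossedSigma n r2 ee ▷ A ≫ (α_ A (V ⊙ C) A).hom ≫ A ◁ crossedR r1 r3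
        ≫ (α_ A A (V ⊙ C)).inv ≫ m ▷ (V ⊙ C)
      = brz5NormalForm m n r1 r2 r3 ee := by
  unfold brz5NormalForm
  calc _ = 𝟙 _ ⊗≫ V ◁ (r2 ▷ C) ▷ A ⊗≫ ((V ⊙ V) ◁ n ≫ ee ▷ C) ▷ A ⊗≫ (A ⊙ V) ◁ n ▷ A
          ⊗≫ (A ⊙ V) ◁ r3 ⊗≫ A ◁ r1 ▷ C ⊗≫ m ▷ (V ⊙ C) := by
        simp only [crossedSigma, crossedR]; monoidal
    _ = 𝟙 _ ⊗≫ V ◁ (r2 ▷ C) ▷ A ⊗≫ ee ▷ ((C ⊙ C) ⊙ A)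
          ⊗≫ (A ⊙ V) ◁ (((C ◁ n) ≫ n) ▷ A ≫ r3) ⊗≫ A ◁ r1 ▷ C ⊗≫ m ▷ (V ⊙ C) := by
        rw [whisker_exchange]; monoidal
    _ = 𝟙 _ ⊗≫ V ◁ (r2 ▷ C) ▷ A
          ⊗≫ (ee ▷ ((C ⊙ C) ⊙ A) ≫ ((A ⊙ V) ⊙ C) ◁ ((α_ C C A).hom ≫ C ◁ r3
            ≫ (α_ C A C).inv ≫ r3 ▷ C ≫ (α_ A C C).hom))
          ⊗≫ (A ⊙ V) ◁ r3 ▷ (C ⊙ C)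
          ⊗≫ ((A ⊙ (V ⊙ A)) ◁ ((C ◁ n) ≫ n) ≫ (A ◁ r1 ≫ (α_ A A V).inv ≫ m ▷ V) ▷ C)
          ⊗≫ 𝟙 _ := by
        rw [twist_mul_mul n r3 hr3]; monoidal
    -- Move the products in `C` to the end and `ee` past the first two twists, then use `heq4`.
    _ = _ := by
        rw [whisker_exchange, ← whisker_exchange, heq4]; monoidal

theorem crossedR_crossedR_crossedSigma_eq_brz5NormalForm
    (heq3 : C ◁ r1 ≫ (α_ C A V).inv ≫ r3 ▷ V ≫ (α_ A C V).hom ≫ A ◁ r2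
      = (α_ C V A).inv ≫ r2 ▷ A ≫ (α_ V C A).hom ≫ V ◁ r3 ≫ (α_ V A C).inv
          ≫ r1 ▷ C ≫ (α_ A V C).hom) :
    (α_ (V ⊙ C) (V ⊙ C) A).hom ≫ (V ⊙ C) ◁ crossedR r1 r3
        ≫ (α_ (V ⊙ C) A (V ⊙ C)).inv ≫ crossedR r1 r3 ▷ (V ⊙ C)
        ≫ (α_ A (V ⊙ C) (V ⊙ C)).hom ≫ A ◁ crossedSigma n r2 ee
        ≫ (α_ A A (V ⊙ C)).inv ≫ m ▷ (V ⊙ C)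
      = brz5NormalForm m n r1 r2 r3 ee := by
  unfold brz5NormalForm
  symm
  calc _ = 𝟙 _ ⊗≫ ((V ◁ r2) ▷ (C ⊙ A) ≫ (V ⊙ (V ⊙ C)) ◁ r3) ⊗≫ V ◁ V ◁ r3 ▷ C
          ⊗≫ V ◁ r1 ▷ (C ⊙ C) ⊗≫ r1 ▷ (V ⊙ (C ⊙ C))
          ⊗≫ (A ◁ ee ≫ (α_ A (A ⊙ V) C).inv ≫ ((α_ A A V).inv ≫ m ▷ V) ▷ C) ▷ (C ⊙ C)
          ⊗≫ (A ⊙ V) ◁ ((C ◁ n) ≫ n) ⊗≫ 𝟙 _ := by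
        monoidal
    _ = 𝟙 _ ⊗≫ (V ⊙ (C ⊙ V)) ◁ r3
          ⊗≫ V ◁ (((α_ C V A).inv ≫ r2 ▷ A ≫ (α_ V C A).hom ≫ V ◁ r3 ≫ (α_ V A C).inv
            ≫ r1 ▷ C ≫ (α_ A V C).hom) ▷ C)
          ⊗≫ r1 ▷ (V ⊙ (C ⊙ C))
          ⊗≫ (A ◁ ee ≫ (α_ A (A ⊙ V) C).inv ≫ ((α_ A A V).inv ≫ m ▷ V) ▷ C) ▷ (C ⊙ C)
          ⊗≫ (A ⊙ V) ◁ ((C ◁ n) ≫ n) ⊗≫ 𝟙 _ := by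
        rw [← whisker_exchange]; monoidal
    _ = 𝟙 _ ⊗≫ (V ⊙ (C ⊙ V)) ◁ r3 ⊗≫ V ◁ C ◁ r1 ▷ C ⊗≫ V ◁ r3 ▷ (V ⊙ C)
          ⊗≫ ((V ⊙ A) ◁ (r2 ▷ C) ≫ r1 ▷ ((V ⊙ C) ⊙ C))
          ⊗≫ ((A ◁ ee ≫ (α_ A (A ⊙ V) C).inv ≫ ((α_ A A V).inv ≫ m ▷ V) ▷ C) ▷ (C ⊙ C)
            ≫ ((A ⊙ V) ⊙ C) ◁ n)
          ⊗≫ (A ⊙ V) ◁ n ⊗≫ 𝟙 _ := by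
        rw [← heq3]; monoidal
    _ = 𝟙 _ ⊗≫ (V ⊙ (C ⊙ V)) ◁ r3 ⊗≫ V ◁ C ◁ r1 ▷ C ⊗≫ V ◁ r3 ▷ (V ⊙ C)
          ⊗≫ r1 ▷ ((C ⊙ V) ⊙ C) ⊗≫ (A ⊙ V) ◁ (r2 ▷ C) ⊗≫ (A ⊙ (V ⊙ V)) ◁ n
          ⊗≫ A ◁ ee ▷ C ⊗≫ (m ▷ (V ⊙ (C ⊙ C)) ≫ A ◁ V ◁ n) ⊗≫ 𝟙 _ := by
        rw [whisker_exchange r1, ← whisker_exchange _ n]; monoidal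
    _ = _ := by
        rw [← whisker_exchange]; simp only [crossedSigma, crossedR]; monoidal

theorem crossedR_crossedSigma_brz5
    (hr3 : n ▷ A ≫ r3
      = (α_ C C A).hom ≫ C ◁ r3 ≫ (α_ C A C).inv ≫ r3 ▷ C ≫ (α_ A C C).hom ≫ A ◁ n)
    (heq3 : C ◁ r1 ≫ (α_ C A V).inv ≫ r3 ▷ V ≫ (α_ A C V).hom ≫ A ◁ r2
      = (α_ C V A).inv ≫ r2 ▷ A ≫ (α_ V C A).hom ≫ V ◁ r3 ≫ (α_ V A C).inv
          ≫ r1 ▷ C ≫ (α_ A V C).hom)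
    (heq4 : (α_ V V A).hom ≫ V ◁ r1 ≫ (α_ V A V).inv ≫ r1 ▷ V ≫ (α_ A V V).hom
          ≫ A ◁ ee ≫ (α_ A (A ⊙ V) C).inv ≫ ((α_ A A V).inv ≫ m ▷ V) ▷ C
      = ee ▷ A ≫ (α_ (A ⊙ V) C A).hom ≫ (A ⊙ V) ◁ r3 ≫ (α_ (A ⊙ V) A C).inv
          ≫ (α_ A V A).hom ▷ C ≫ (A ◁ r1) ▷ C ≫ ((α_ A A V).inv ≫ m ▷ V) ▷ C) :
    (α_ (V ⊙ C) (V ⊙ C) A).hom ≫ (V ⊙ C) ◁ crossedR r1 r3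
        ≫ (α_ (V ⊙ C) A (V ⊙ C)).inv ≫ crossedR r1 r3 ▷ (V ⊙ C)
        ≫ (α_ A (V ⊙ C) (V ⊙ C)).hom ≫ A ◁ crossedSigma n r2 ee
        ≫ (α_ A A (V ⊙ C)).inv ≫ m ▷ (V ⊙ C)
      = crossedSigma n r2 ee ▷ A ≫ (α_ A (V ⊙ C) A).hom ≫ A ◁ crossedR r1 r3
        ≫ (α_ A A (V ⊙ C)).inv ≫ m ▷ (V ⊙ C) := by
  rw [crossedR_crossedR_crossedSigma_eq_brz5NormalForm m n r1 r2 r3 ee heq3,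
    crossedSigma_whiskerRight_comp_crossedR_eq_brz5NormalForm m n r1 r2 r3 ee hr3 heq4]

end StringDiagrams

section ModuleCategory
open CategoryTheory MonoidalCategory
universe w u

/-- Modules over `R` in the universe `max w u`, a monoidal category even when this universe is
larger than that of `R` (the unit object is `ULift R`). Morphisms are bare linear maps, so that
whiskering, associators and composition are `lTensor`, `rTensor`, `TensorProduct.assoc` and `∘ₗ`
on the nose. -/
structure ModuleCatMax (R : Type u) [CommSemiring R] where
  carrier : Type (max w u)
  [isAddCommMonoid : AddCommMonoid carrier]
  [isModule : Module R carrier]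

attribute [instance] ModuleCatMax.isAddCommMonoid ModuleCatMax.isModule

namespace ModuleCatMax

variable {R : Type u} [CommSemiring R]

instance : CoeSort (ModuleCatMax.{w} R) (Type (max w u)) := ⟨carrier⟩

abbrev of (R : Type u) [CommSemiring R] (X : Type (max w u)) [AddCommMonoid X] [Module R X] :
    ModuleCatMax.{w} R :=
  ⟨X⟩

instance : Category (ModuleCatMax.{w} R) where
  Hom M N := M →ₗ[R] N
  id _ := LinearMap.id
  comp f g := g ∘ₗ f

def isoOfLinearEquiv {M N : ModuleCatMax.{w} R} (e : M ≃ₗ[R] N) : M ≅ N where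
  hom := e.toLinearMap
  inv := e.symm.toLinearMap
  hom_inv_id := LinearMap.ext e.symm_apply_apply
  inv_hom_id := LinearMap.ext e.apply_symm_apply

def leftUnitorEquiv (M : Type (max w u)) [AddCommMonoid M] [Module R M] :
    ULift.{max w u} R ⊗[R] M ≃ₗ[R] M :=
  (TensorProduct.congr ULift.moduleEquiv (LinearEquiv.refl R M)).trans (TensorProduct.lid R M)

def rightUnitorEquiv (M : Type (max w u)) [AddCommMonoid M] [Module R M] :
    M ⊗[R] ULift.{max w u} R ≃ₗ[R] M :=
  (TensorProduct.congr (LinearEquiv.refl R M) ULift.moduleEquiv).trans (TensorProduct.rid R M)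

variable {M N : Type (max w u)} [AddCommMonoid M] [Module R M] [AddCommMonoid N] [Module R N]

theorem leftUnitorEquiv_naturality (f : M →ₗ[R] N) :
    (leftUnitorEquiv N).toLinearMap ∘ₗ TensorProduct.map LinearMap.id f
      = f ∘ₗ (leftUnitorEquiv M).toLinearMap :=
  TensorProduct.ext' fun _ _ => by simp [leftUnitorEquiv]

theorem rightUnitorEquiv_naturality (f : M →ₗ[R] N) :
    (rightUnitorEquiv N).toLinearMap ∘ₗ TensorProduct.map f LinearMap.id
      = f ∘ₗ (rightUnitorEquiv M).toLinearMap :=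
  TensorProduct.ext' fun _ _ => by simp [rightUnitorEquiv]

theorem unitorEquiv_triangle :
    TensorProduct.map LinearMap.id (leftUnitorEquiv N).toLinearMap
        ∘ₗ (TensorProduct.assoc R M (ULift.{max w u} R) N).toLinearMap
      = TensorProduct.map (rightUnitorEquiv M).toLinearMap LinearMap.id :=
  TensorProduct.ext_threefold fun _ _ _ => by
    simp [leftUnitorEquiv, rightUnitorEquiv, TensorProduct.smul_tmul]

instance : MonoidalCategoryStruct (ModuleCatMax.{w} R) where
  tensorObj M N := of R (M ⊗[R] N)
  whiskerLeft M _ _ f := LinearMap.lTensor M f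
  whiskerRight f N := LinearMap.rTensor N f
  tensorHom f g := TensorProduct.map f g
  tensorUnit := of R (ULift.{max w u} R)
  associator M N K := isoOfLinearEquiv (TensorProduct.assoc R M N K)
  leftUnitor M := isoOfLinearEquiv (leftUnitorEquiv M)
  rightUnitor M := isoOfLinearEquiv (rightUnitorEquiv M)

instance : MonoidalCategory (ModuleCatMax.{w} R) := .ofTensorHom
  (id_tensorHom_id := fun _ _ => TensorProduct.map_id)
  (id_tensorHom := fun _ _ _ _ => rfl)
  (tensorHom_id := fun _ _ => rfl)
  (tensorHom_comp_tensorHom := fun _ _ _ _ => TensorProduct.ext' fun _ _ => rfl)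
  (associator_naturality := fun _ _ _ => TensorProduct.ext_threefold fun _ _ _ => rfl)
  (leftUnitor_naturality := leftUnitorEquiv_naturality)
  (rightUnitor_naturality := rightUnitorEquiv_naturality)
  (pentagon := fun _ _ _ _ => TensorProduct.ext_fourfold fun _ _ _ _ => rfl)
  (triangle := fun _ _ => unitorEquiv_triangle)

end ModuleCatMax

end ModuleCategory

section Transport
variable {R : Type*} [CommSemiring R] {X Y Z X' Y' Z' : Type*}
  [AddCommMonoid X] [Module R X] [AddCommMonoid Y] [Module R Y] [AddCommMonoid Z] [Module R Z]
  [AddCommMonoid X'] [Module R X'] [AddCommMonoid Y'] [Module R Y'] [AddCommMonoid Z']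
  [Module R Z']

def Corresponds (eX : X ≃ₗ[R] X') (eY : Y ≃ₗ[R] Y') (F : X →ₗ[R] Y) (F' : X' →ₗ[R] Y') :
    Prop :=
  F' ∘ₗ eX.toLinearMap = eY.toLinearMap ∘ₗ F

namespace Corresponds

variable {eX : X ≃ₗ[R] X'} {eY : Y ≃ₗ[R] Y'} {eZ : Z ≃ₗ[R] Z'}

theorem apply {F : X →ₗ[R] Y} {F' : X' →ₗ[R] Y'} (h : Corresponds eX eY F F') (x : X) :
    F' (eX x) = eY (F x) :=
  LinearMap.congr_fun h x

theorem eq_iff {F G : X →ₗ[R] Y} {F' G' : X' →ₗ[R] Y'} (hF : Corresponds eX eY F F')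
    (hG : Corresponds eX eY G G') : F' = G' ↔ F = G := by
  refine ⟨fun h ↦ LinearMap.ext fun x ↦ eY.injective ?_, fun h ↦ LinearMap.ext fun x ↦ ?_⟩
  · rw [← hF.apply, ← hG.apply, h]
  · rw [← eX.apply_symm_apply x, hF.apply, hG.apply, h]

theorem comp {F : X →ₗ[R] Y} {F' : X' →ₗ[R] Y'} {G : Y →ₗ[R] Z} {G' : Y' →ₗ[R] Z'}
    (hF : Corresponds eX eY F F') (hG : Corresponds eY eZ G G') :
    Corresponds eX eZ (G ∘ₗ F) (G' ∘ₗ F') :=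
  LinearMap.ext fun x ↦ by simp [hF.apply, hG.apply]

theorem conj (eX : X ≃ₗ[R] X') (eY : Y ≃ₗ[R] Y') (F : X →ₗ[R] Y) :
    Corresponds eX eY F (eX.arrowCongr eY F) :=
  LinearMap.ext fun x ↦ by simp

theorem lTensor (e : Z ≃ₗ[R] Z') {F : X →ₗ[R] Y} {F' : X' →ₗ[R] Y'}
    (h : Corresponds eX eY F F') :
    Corresponds (TensorProduct.congr e eX) (TensorProduct.congr e eY)
      (LinearMap.lTensor Z F) (LinearMap.lTensor Z' F') :=
  TensorProduct.ext' fun _ _ ↦ by simp [h.apply]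

theorem rTensor (e : Z ≃ₗ[R] Z') {F : X →ₗ[R] Y} {F' : X' →ₗ[R] Y'}
    (h : Corresponds eX eY F F') :
    Corresponds (TensorProduct.congr eX e) (TensorProduct.congr eY e)
      (LinearMap.rTensor Z F) (LinearMap.rTensor Z' F') :=
  TensorProduct.ext' fun _ _ ↦ by simp [h.apply]

theorem assoc :
    Corresponds (TensorProduct.congr (TensorProduct.congr eX eY) eZ)
      (TensorProduct.congr eX (TensorProduct.congr eY eZ))
      (TensorProduct.assoc R X Y Z).toLinearMap (TensorProduct.assoc R X' Y' Z').toLinearMap :=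
  TensorProduct.ext_threefold fun _ _ _ ↦ rfl

theorem assoc_symm :
    Corresponds (TensorProduct.congr eX (TensorProduct.congr eY eZ))
      (TensorProduct.congr (TensorProduct.congr eX eY) eZ)
      (TensorProduct.assoc R X Y Z).symm.toLinearMap
      (TensorProduct.assoc R X' Y' Z').symm.toLinearMap :=
  TensorProduct.ext_threefold' fun _ _ _ ↦ rfl

theorem mul' {A A' : Type*} [Semiring A] [Algebra R A] [Semiring A'] [Algebra R A']
    (e : A ≃ₐ[R] A') :
    Corresponds (TensorProduct.congr e.toLinearEquiv e.toLinearEquiv) e.toLinearEquiv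
      (LinearMap.mul' R A) (LinearMap.mul' R A') :=
  TensorProduct.ext' fun _ _ ↦ by simp

end Corresponds

end Transport

section CommonUniverse
universe w u
variable {K : Type u} [Field K] {A V C : Type (max w u)} [Ring A] [Algebra K A]
  [AddCommGroup V] [Module K V] [Ring C] [Algebra K C]

theorem tsSigma_brz5_of_mul_right_eq3_eq4 (R1 : V ⊗[K] A →ₗ[K] A ⊗[K] V)
    (R2 : C ⊗[K] V →ₗ[K] V ⊗[K] C) (R3 : C ⊗[K] A →ₗ[K] A ⊗[K] C)
    (E : V ⊗[K] V →ₗ[K] (A ⊗[K] V) ⊗[K] C)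
    (hmul : R3 ∘ₗ rTensor A (mul' K C) = lTensor A (mul' K C) ∘ₗ α K A C C ∘ₗ rTensor C R3
      ∘ₗ α' K C A C ∘ₗ lTensor C R3 ∘ₗ α K C C A)
    (heq3 : lTensor A R2 ∘ₗ α K A C V ∘ₗ rTensor V R3 ∘ₗ α' K C A V ∘ₗ lTensor C R1
      = α K A V C ∘ₗ rTensor C R1 ∘ₗ α' K V A C ∘ₗ lTensor V R3 ∘ₗ α K V C A
        ∘ₗ rTensor A R2 ∘ₗ α' K C V A)
    (heq4 : rTensor C (mulAV K A V) ∘ₗ α' K A (A ⊗[K] V) C ∘ₗ lTensor A E ∘ₗ α K A V V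
        ∘ₗ rTensor V R1 ∘ₗ α' K V A V ∘ₗ lTensor V R1 ∘ₗ α K V V A
      = rTensor C (mulAV K A V) ∘ₗ rTensor C (lTensor A R1) ∘ₗ rTensor C (α K A V A)
        ∘ₗ α' K (A ⊗[K] V) A C ∘ₗ lTensor (A ⊗[K] V) R3 ∘ₗ α K (A ⊗[K] V) C A ∘ₗ rTensor A E) :
    rTensor (V ⊗[K] C) (mul' K A) ∘ₗ α' K A A (V ⊗[K] C)
        ∘ₗ lTensor A (tsSigma K A V C R2 E) ∘ₗ α K A (V ⊗[K] C) (V ⊗[K] C)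
        ∘ₗ rTensor (V ⊗[K] C) (tsR K A V C R1 R3) ∘ₗ α' K (V ⊗[K] C) A (V ⊗[K] C)
        ∘ₗ lTensor (V ⊗[K] C) (tsR K A V C R1 R3)
        ∘ₗ α K (V ⊗[K] C) (V ⊗[K] C) A
      = rTensor (V ⊗[K] C) (mul' K A) ∘ₗ α' K A A (V ⊗[K] C)
        ∘ₗ lTensor A (tsR K A V C R1 R3) ∘ₗ α K A (V ⊗[K] C) A
        ∘ₗ rTensor A (tsSigma K A V C R2 E) :=
  crossedR_crossedSigma_brz5 (M := ModuleCatMax.{w} K) (A := .of K A) (V := .of K V)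
    (C := .of K C) (mul' K A) (mul' K C) R1 R2 R3 E hmul heq3 heq4

end CommonUniverse

theorem tsSigma_satisfies_brz5
    (A V C : Type*) [Ring A] [Algebra k A] [AddCommGroup V] [Module k V]
    [Ring C] [Algebra k C] (e : V)
    (R1 : V ⊗[k] A →ₗ[k] A ⊗[k] V) (R2 : C ⊗[k] V →ₗ[k] V ⊗[k] C)
    (R3 : C ⊗[k] A →ₗ[k] A ⊗[k] C) (E : V ⊗[k] V →ₗ[k] (A ⊗[k] V) ⊗[k] C)
    (h : IsTwoSidedData k A V C e R1 R2 R3 E) :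
    rTensor (V ⊗[k] C) (mul' k A) ∘ₗ α' k A A (V ⊗[k] C)
        ∘ₗ lTensor A (tsSigma k A V C R2 E) ∘ₗ α k A (V ⊗[k] C) (V ⊗[k] C)
        ∘ₗ rTensor (V ⊗[k] C) (tsR k A V C R1 R3) ∘ₗ α' k (V ⊗[k] C) A (V ⊗[k] C)
        ∘ₗ lTensor (V ⊗[k] C) (tsR k A V C R1 R3)
        ∘ₗ α k (V ⊗[k] C) (V ⊗[k] C) A
      = rTensor (V ⊗[k] C) (mul' k A) ∘ₗ α' k A A (V ⊗[k] C)
        ∘ₗ lTensor A (tsR k A V C R1 R3) ∘ₗ α k A (V ⊗[k] C) A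
        ∘ₗ rTensor A (tsSigma k A V C R2 E) := by
  -- `u_1, …, u_4` are the universes of `k, A, V, C`.
  let eA := (ULift.algEquiv : ULift.{max u_1 u_3 u_4} A ≃ₐ[k] A).symm
  let eV := (ULift.moduleEquiv : ULift.{max u_1 u_2 u_4} V ≃ₗ[k] V).symm
  let eC := (ULift.algEquiv : ULift.{max u_1 u_2 u_3} C ≃ₐ[k] C).symm
  have hA := Corresponds.mul' eA
  have hC := Corresponds.mul' eC
  let e1 := (congr eV eA.toLinearEquiv).arrowCongr (congr eA.toLinearEquiv eV) R1
  let e2 := (congr eC.toLinearEquiv eV).arrowCongr (congr eV eC.toLinearEquiv) R2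
  let e3 := (congr eC.toLinearEquiv eA.toLinearEquiv).arrowCongr
    (congr eA.toLinearEquiv eC.toLinearEquiv) R3
  let eE := (congr eV eV).arrowCongr (congr (congr eA.toLinearEquiv eV) eC.toLinearEquiv) E
  apply (Corresponds.eq_iff ?_ ?_).mp
    (tsSigma_brz5_of_mul_right_eq3_eq4.{max u_2 u_3 u_4} e1 e2 e3 eE ?hmul ?heq3 ?heq4)
  case' hmul => apply (Corresponds.eq_iff ?_ ?_).mpr h.twist.mul_right
  case' heq3 => apply (Corresponds.eq_iff ?_ ?_).mpr h.eq3
  case' heq4 => apply (Corresponds.eq_iff ?_ ?_).mpr h.eq4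
  -- Each composite is matched factor by factor with its lifted copy.
  all_goals try simp only [tsR, tsSigma, mulAV, mulXC]
  all_goals with_reducible_and_instances repeat'
    first
    | assumption
    | exact Corresponds.conj _ _ _
    | apply Corresponds.comp
    | apply Corresponds.lTensor
    | apply Corresponds.rTensor
    | apply Corresponds.assoc
    | apply Corresponds.assoc_symm

end TwoSidedCP
end
end

section
/- Let (A, μ_A, 1_A) and (C, μ_C, 1_C) be associative unital algebras over a field k and V a k-vector space with a distinguished nonzero element 1_V. Suppose A⊗V⊗C carries an associative algebra structure (multiplication denoted ·) with unit 1_A⊗1_V⊗1_C such that the maps a ↦ a⊗1_V⊗1_C and c ↦ 1_A⊗1_V⊗c are algebra maps, and such that: (1_A⊗v⊗1_C)·(a'⊗1_V⊗1_C) ∈ A⊗V⊗1_C, (1_A⊗1_V⊗c)·(1_A⊗v'⊗1_C) ∈ 1_A⊗V⊗C, (1_A⊗1_V⊗c)·(a'⊗1_V⊗1_C) ∈ A⊗1_V⊗C, and a⊗v⊗c = (a⊗1_V⊗1_C)·(1_A⊗v⊗1_C)·(1_A⊗1_V⊗c) for all a,a'∈A, v,v'∈V, c∈C. Then there exist linear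 maps R1: V⊗A → A⊗V, R2: C⊗V → V⊗C, R3: C⊗A → A⊗C and E: V⊗V → A⊗V⊗C making (A, V, C, R1, R2, R3, E) two-sided crossed product data, and the given algebra structure coincides with the two-sided crossed product A ⋊ V ⋉ C afforded by R1, R2, R3, E. -/
open TensorProduct LinearMap

set_option maxHeartbeats 1000000
set_option synthInstance.maxHeartbeats 400000

noncomputable section

namespace TwoSidedCP

variable (k : Type*) [Field k]

section Converse

set_option linter.unusedVariables false

lemma exists_dual_one {M : Type*} [AddCommGroup M] [Module k M] (x : M) (hx : x ≠ 0) :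
    ∃ f : M →ₗ[k] k, f x = 1 := by
  obtain ⟨q, hq⟩ := (Submodule.span k {x}).exists_isCompl
  refine ⟨(LinearEquiv.toSpanNonzeroSingleton k M x hx).symm.toLinearMap ∘ₗ
    Submodule.linearProjOfIsCompl _ q hq, ?_⟩
  have h1 : (Submodule.linearProjOfIsCompl _ q hq) x
      = ⟨x, Submodule.mem_span_singleton_self x⟩ :=
    Submodule.linearProjOfIsCompl_apply_left hq ⟨x, Submodule.mem_span_singleton_self x⟩
  simp only [LinearMap.comp_apply, h1]
  have h2 : (LinearEquiv.toSpanNonzeroSingleton k M x hx) 1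
      = ⟨x, Submodule.mem_span_singleton_self x⟩ := by
    ext; simp [LinearEquiv.toSpanNonzeroSingleton_one]
  exact (LinearEquiv.symm_apply_eq _).2 h2.symm

variable (A V C : Type*) [Ring A] [Algebra k A] [AddCommGroup V] [Module k V]
  [Ring C] [Algebra k C]

structure Setup where
  e : V
  πA : A →ₗ[k] k
  hπA : πA 1 = 1
  πC : C →ₗ[k] k
  hπC : πC 1 = 1
  πV : V →ₗ[k] k
  hπV : πV e = 1
  m : ((A ⊗[k] V) ⊗[k] C) ⊗[k] ((A ⊗[k] V) ⊗[k] C) →ₗ[k] (A ⊗[k] V) ⊗[k] C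
  hul : ∀ x, m ((((1 : A) ⊗ₜ[k] e) ⊗ₜ[k] (1 : C)) ⊗ₜ[k] x) = x
  hur : ∀ x, m (x ⊗ₜ[k] (((1 : A) ⊗ₜ[k] e) ⊗ₜ[k] (1 : C))) = x
  hassoc : ∀ x y z, m (m (x ⊗ₜ[k] y) ⊗ₜ[k] z) = m (x ⊗ₜ[k] m (y ⊗ₜ[k] z))
  halgA : ∀ a a' : A,
      m (((a ⊗ₜ[k] e) ⊗ₜ[k] (1 : C)) ⊗ₜ[k] ((a' ⊗ₜ[k] e) ⊗ₜ[k] (1 : C)))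
        = ((a * a') ⊗ₜ[k] e) ⊗ₜ[k] (1 : C)
  halgC : ∀ c c' : C,
      m ((((1 : A) ⊗ₜ[k] e) ⊗ₜ[k] c) ⊗ₜ[k] (((1 : A) ⊗ₜ[k] e) ⊗ₜ[k] c'))
        = ((1 : A) ⊗ₜ[k] e) ⊗ₜ[k] (c * c')
  hmem1 : ∀ (v : V) (a' : A),
      m ((((1 : A) ⊗ₜ[k] v) ⊗ₜ[k] (1 : C)) ⊗ₜ[k] ((a' ⊗ₜ[k] e) ⊗ₜ[k] (1 : C)))
        ∈ LinearMap.range ((TensorProduct.mk k (A ⊗[k] V) C).flip (1 : C))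
  hmem2 : ∀ (c : C) (v' : V),
      m ((((1 : A) ⊗ₜ[k] e) ⊗ₜ[k] c) ⊗ₜ[k] (((1 : A) ⊗ₜ[k] v') ⊗ₜ[k] (1 : C)))
        ∈ LinearMap.range (rTensor C (TensorProduct.mk k A V (1 : A)))
  hmem3 : ∀ (c : C) (a' : A),
      m ((((1 : A) ⊗ₜ[k] e) ⊗ₜ[k] c) ⊗ₜ[k] ((a' ⊗ₜ[k] e) ⊗ₜ[k] (1 : C)))
        ∈ LinearMap.range (rTensor C ((TensorProduct.mk k A V).flip e))
  hfact : ∀ (a : A) (v : V) (c : C),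
      m (m (((a ⊗ₜ[k] e) ⊗ₜ[k] (1 : C)) ⊗ₜ[k] (((1 : A) ⊗ₜ[k] v) ⊗ₜ[k] (1 : C)))
          ⊗ₜ[k] (((1 : A) ⊗ₜ[k] e) ⊗ₜ[k] c)) = (a ⊗ₜ[k] v) ⊗ₜ[k] c

namespace Setup

variable {k A V C} (S : Setup k A V C)

/-- inclusion of `A`. -/
def jA : A →ₗ[k] (A ⊗[k] V) ⊗[k] C :=
  ((TensorProduct.mk k (A ⊗[k] V) C).flip 1) ∘ₗ ((TensorProduct.mk k A V).flip S.e)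

def jV (S : Setup k A V C) : V →ₗ[k] (A ⊗[k] V) ⊗[k] C :=
  ((TensorProduct.mk k (A ⊗[k] V) C).flip 1) ∘ₗ (TensorProduct.mk k A V 1)

def jC : C →ₗ[k] (A ⊗[k] V) ⊗[k] C := TensorProduct.mk k (A ⊗[k] V) C ((1 : A) ⊗ₜ[k] S.e)

def jAV (S : Setup k A V C) : A ⊗[k] V →ₗ[k] (A ⊗[k] V) ⊗[k] C := (TensorProduct.mk k (A ⊗[k] V) C).flip 1

def jVC (S : Setup k A V C) : V ⊗[k] C →ₗ[k] (A ⊗[k] V) ⊗[k] C := rTensor C (TensorProduct.mk k A V 1)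

def jAC : A ⊗[k] C →ₗ[k] (A ⊗[k] V) ⊗[k] C := rTensor C ((TensorProduct.mk k A V).flip S.e)

lemma jA_apply (a : A) : S.jA a = (a ⊗ₜ[k] S.e) ⊗ₜ[k] (1 : C) := rfl
lemma jV_apply (v : V) : S.jV v = ((1 : A) ⊗ₜ[k] v) ⊗ₜ[k] (1 : C) := rfl
lemma jC_apply (c : C) : S.jC c = ((1 : A) ⊗ₜ[k] S.e) ⊗ₜ[k] c := rfl
lemma jAV_apply (x : A ⊗[k] V) : S.jAV x = x ⊗ₜ[k] (1 : C) := rfl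
lemma jVC_apply (v : V) (c : C) : S.jVC (v ⊗ₜ[k] c) = ((1 : A) ⊗ₜ[k] v) ⊗ₜ[k] c := rfl
lemma jAC_apply (a : A) (c : C) : S.jAC (a ⊗ₜ[k] c) = (a ⊗ₜ[k] S.e) ⊗ₜ[k] c := rfl

/-- strip the `C` factor. -/
def sC : (A ⊗[k] V) ⊗[k] C →ₗ[k] A ⊗[k] V :=
  (TensorProduct.rid k (A ⊗[k] V)).toLinearMap ∘ₗ lTensor (A ⊗[k] V) S.πC

def stripA : A ⊗[k] V →ₗ[k] V := (TensorProduct.lid k V).toLinearMap ∘ₗ rTensor V S.πA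

def sA : (A ⊗[k] V) ⊗[k] C →ₗ[k] V ⊗[k] C := rTensor C S.stripA

def stripV : A ⊗[k] V →ₗ[k] A := (TensorProduct.rid k A).toLinearMap ∘ₗ lTensor A S.πV

def sV : (A ⊗[k] V) ⊗[k] C →ₗ[k] A ⊗[k] C := rTensor C S.stripV

lemma sC_jAV (x : A ⊗[k] V) : S.sC (S.jAV x) = x := by
  simp [sC, jAV, S.hπC]

lemma sA_jVC (y : V ⊗[k] C) : S.sA (S.jVC y) = y := by
  have h : S.stripA ∘ₗ TensorProduct.mk k A V 1 = LinearMap.id := by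
    ext v; simp [stripA, S.hπA]
  have h2 : S.sA (S.jVC y) = rTensor C (S.stripA ∘ₗ TensorProduct.mk k A V 1) y := by
    rw [sA, jVC, LinearMap.rTensor_comp]; rfl
  rw [h2, h, LinearMap.rTensor_id, LinearMap.id_apply]

lemma sV_jAC (y : A ⊗[k] C) : S.sV (S.jAC y) = y := by
  have h : S.stripV ∘ₗ (TensorProduct.mk k A V).flip S.e = LinearMap.id := by
    ext a; simp [stripV, S.hπV]
  have h2 : S.sV (S.jAC y) = rTensor C (S.stripV ∘ₗ (TensorProduct.mk k A V).flip S.e) y := by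
    rw [sV, jAC, LinearMap.rTensor_comp]; rfl
  rw [h2, h, LinearMap.rTensor_id, LinearMap.id_apply]

/-- The map `R1`. -/
def R1 : V ⊗[k] A →ₗ[k] A ⊗[k] V := S.sC ∘ₗ S.m ∘ₗ TensorProduct.map (S.jV) (S.jA)

def R2 : C ⊗[k] V →ₗ[k] V ⊗[k] C := S.sA ∘ₗ S.m ∘ₗ TensorProduct.map (S.jC) (S.jV)

def R3 : C ⊗[k] A →ₗ[k] A ⊗[k] C := S.sV ∘ₗ S.m ∘ₗ TensorProduct.map (S.jC) (S.jA)

def Emap : V ⊗[k] V →ₗ[k] (A ⊗[k] V) ⊗[k] C := S.m ∘ₗ TensorProduct.map (S.jV) (S.jV)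

lemma key1 (v : V) (a : A) : S.m (S.jV v ⊗ₜ[k] S.jA a) = S.jAV (S.R1 (v ⊗ₜ[k] a)) := by
  obtain ⟨y, hy⟩ := S.hmem1 v a
  have hy' : S.jAV y = S.m (S.jV v ⊗ₜ[k] S.jA a) := hy
  have : S.R1 (v ⊗ₜ[k] a) = y := by
    rw [R1, LinearMap.comp_apply, LinearMap.comp_apply, TensorProduct.map_tmul, ← hy', sC_jAV]
  rw [this, hy']

lemma key2 (c : C) (v : V) : S.m (S.jC c ⊗ₜ[k] S.jV v) = S.jVC (S.R2 (c ⊗ₜ[k] v)) := by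
  obtain ⟨y, hy⟩ := S.hmem2 c v
  have hy' : S.jVC y = S.m (S.jC c ⊗ₜ[k] S.jV v) := hy
  have : S.R2 (c ⊗ₜ[k] v) = y := by
    rw [R2, LinearMap.comp_apply, LinearMap.comp_apply, TensorProduct.map_tmul, ← hy', sA_jVC]
  rw [this, hy']

lemma key3 (c : C) (a : A) : S.m (S.jC c ⊗ₜ[k] S.jA a) = S.jAC (S.R3 (c ⊗ₜ[k] a)) := by
  obtain ⟨y, hy⟩ := S.hmem3 c a
  have hy' : S.jAC y = S.m (S.jC c ⊗ₜ[k] S.jA a) := hy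
  have : S.R3 (c ⊗ₜ[k] a) = y := by
    rw [R3, LinearMap.comp_apply, LinearMap.comp_apply, TensorProduct.map_tmul, ← hy', sV_jAC]
  rw [this, hy']

lemma keyE (v v' : V) : S.m (S.jV v ⊗ₜ[k] S.jV v') = S.Emap (v ⊗ₜ[k] v') := rfl

lemma munit : S.jA (1 : A) = ((1 : A) ⊗ₜ[k] S.e) ⊗ₜ[k] (1 : C) := rfl

/-- `jA a · jV v = (a ⊗ v) ⊗ 1`. -/
lemma F0 (a : A) (v : V) : S.m (S.jA a ⊗ₜ[k] S.jV v) = S.jAV (a ⊗ₜ[k] v) := by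
  have h := S.hfact a v 1
  have h1 : S.m ((S.m (S.jA a ⊗ₜ[k] S.jV v)) ⊗ₜ[k] (((1:A) ⊗ₜ[k] S.e) ⊗ₜ[k] (1:C)))
      = (a ⊗ₜ[k] v) ⊗ₜ[k] (1 : C) := h
  rw [S.hur] at h1
  exact h1

lemma F1 (a : A) (v : V) (c : C) :
    S.m (S.jAV (a ⊗ₜ[k] v) ⊗ₜ[k] S.jC c) = (a ⊗ₜ[k] v) ⊗ₜ[k] c := by
  have h := S.hfact a v c
  rw [show S.m (((a ⊗ₜ[k] S.e) ⊗ₜ[k] (1:C)) ⊗ₜ[k] (((1:A) ⊗ₜ[k] v) ⊗ₜ[k] (1:C)))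
      = S.m (S.jA a ⊗ₜ[k] S.jV v) from rfl, S.F0] at h
  exact h

lemma jAV_inj {x y : A ⊗[k] V} (h : S.jAV x = S.jAV y) : x = y := by
  have := congrArg S.sC h; rwa [S.sC_jAV, S.sC_jAV] at this

lemma jVC_inj {x y : V ⊗[k] C} (h : S.jVC x = S.jVC y) : x = y := by
  have := congrArg S.sA h; rwa [S.sA_jVC, S.sA_jVC] at this

lemma jAC_inj {x y : A ⊗[k] C} (h : S.jAC x = S.jAC y) : x = y := by
  have := congrArg S.sV h; rwa [S.sV_jAC, S.sV_jAC] at this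

lemma halgA' (a a' : A) : S.m (S.jA a ⊗ₜ[k] S.jA a') = S.jA (a * a') := S.halgA a a'

lemma halgC' (c c' : C) : S.m (S.jC c ⊗ₜ[k] S.jC c') = S.jC (c * c') := S.halgC c c'

lemma L11 : S.m ∘ₗ TensorProduct.map S.jAV S.jC = LinearMap.id := by
  ext a v c
  simpa using S.F1 a v c

lemma L11pt (x : A ⊗[k] V) (c : C) : S.m (S.jAV x ⊗ₜ[k] S.jC c) = x ⊗ₜ[k] c := by
  simpa using LinearMap.congr_fun S.L11 (x ⊗ₜ[k] c)

lemma F1' (v : V) (c : C) : S.m (S.jV v ⊗ₜ[k] S.jC c) = S.jVC (v ⊗ₜ[k] c) :=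
  S.L11pt ((1 : A) ⊗ₜ[k] v) c

lemma L14 : S.m ∘ₗ TensorProduct.map (LinearMap.id) S.jC = mulXC k (A ⊗[k] V) C := by
  ext a v c c'
  simp only [comp_apply, map_tmul, id_coe, id_eq, AlgebraTensorModule.curry_apply,
    curry_apply, coe_restrictScalars, mulXC, LinearEquiv.coe_coe, assoc_tmul,
    lTensor_tmul, mul'_apply]
  conv_lhs => rw [← S.L11pt (a ⊗ₜ[k] v) c]
  rw [S.hassoc, S.halgC', S.L11pt]

lemma L14pt (x : (A ⊗[k] V) ⊗[k] C) (c : C) :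
    S.m (x ⊗ₜ[k] S.jC c) = mulXC k (A ⊗[k] V) C (x ⊗ₜ[k] c) := by
  simpa using LinearMap.congr_fun S.L14 (x ⊗ₜ[k] c)

lemma L10 : S.m ∘ₗ TensorProduct.map S.jA (LinearMap.id)
    = rTensor C (mulAV k A V) ∘ₗ α' k A (A ⊗[k] V) C := by
  ext a a' v c
  simp only [comp_apply, map_tmul, id_coe, id_eq, AlgebraTensorModule.curry_apply,
    curry_apply, coe_restrictScalars, LinearEquiv.coe_coe, assoc_symm_tmul, rTensor_tmul,
    mulAV, assoc_tmul, mul'_apply]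
  rw [← S.L11pt (a' ⊗ₜ[k] v) c, ← S.hassoc, ← S.F0, ← S.hassoc, S.halgA', S.F0, S.L11pt]

lemma L10pt (a : A) (t : (A ⊗[k] V) ⊗[k] C) :
    S.m (S.jA a ⊗ₜ[k] t) = rTensor C (mulAV k A V) (α' k A (A ⊗[k] V) C (a ⊗ₜ[k] t)) := by
  simpa using LinearMap.congr_fun S.L10 (a ⊗ₜ[k] t)


lemma L6pt (a : A) (c : C) : S.m (S.jA a ⊗ₜ[k] S.jC c) = S.jAC (a ⊗ₜ[k] c) := by
  rw [show S.jC c = (((1:A) ⊗ₜ[k] S.e) ⊗ₜ[k] c) from rfl, S.L10pt]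
  simp [mulAV, jAC_apply, mul'_apply]

lemma L7pt (a : A) (y : A ⊗[k] V) :
    S.m (S.jA a ⊗ₜ[k] S.jAV y) = S.jAV (mulAV k A V (a ⊗ₜ[k] y)) := by
  rw [jAV_apply, S.L10pt]
  simp [jAV_apply]

lemma L8 : S.m ∘ₗ TensorProduct.map S.jA S.jVC = α' k A V C := by
  ext a v c
  simp only [comp_apply, map_tmul, AlgebraTensorModule.curry_apply, curry_apply,
    coe_restrictScalars, LinearEquiv.coe_coe]
  rw [show S.jVC (v ⊗ₜ[k] c) = ((1:A) ⊗ₜ[k] v) ⊗ₜ[k] c from rfl, S.L10pt]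
  simp [mulAV, mul'_apply]

lemma L8pt (a : A) (y : V ⊗[k] C) :
    S.m (S.jA a ⊗ₜ[k] S.jVC y) = α' k A V C (a ⊗ₜ[k] y) := by
  simpa using LinearMap.congr_fun S.L8 (a ⊗ₜ[k] y)

lemma L9 : S.m ∘ₗ TensorProduct.map S.jA S.jAC
    = S.jAC ∘ₗ rTensor C (mul' k A) ∘ₗ α' k A A C := by
  ext a a' c
  simp only [comp_apply, map_tmul, AlgebraTensorModule.curry_apply, curry_apply,
    coe_restrictScalars, LinearEquiv.coe_coe, assoc_symm_tmul, rTensor_tmul, mul'_apply]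
  rw [show S.jAC (a' ⊗ₜ[k] c) = (a' ⊗ₜ[k] S.e) ⊗ₜ[k] c from rfl, S.L10pt]
  simp [mulAV, mul'_apply, jAC_apply]

lemma L9pt (a : A) (y : A ⊗[k] C) :
    S.m (S.jA a ⊗ₜ[k] S.jAC y)
      = S.jAC (rTensor C (mul' k A) (α' k A A C (a ⊗ₜ[k] y))) := by
  simpa using LinearMap.congr_fun S.L9 (a ⊗ₜ[k] y)

lemma L15 : S.m ∘ₗ TensorProduct.map S.jAV S.jA
    = S.jAV ∘ₗ mulAV k A V ∘ₗ lTensor A S.R1 ∘ₗ α k A V A := by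
  ext a v a'
  simp only [comp_apply, map_tmul, AlgebraTensorModule.curry_apply, curry_apply,
    coe_restrictScalars, LinearEquiv.coe_coe, assoc_tmul, lTensor_tmul]
  conv_lhs => rw [← S.F0 a v]
  rw [S.hassoc, S.key1, S.L7pt]

lemma L15pt (y : A ⊗[k] V) (a' : A) :
    S.m (S.jAV y ⊗ₜ[k] S.jA a')
      = S.jAV (mulAV k A V (lTensor A S.R1 (α k A V A (y ⊗ₜ[k] a')))) := by
  simpa using LinearMap.congr_fun S.L15 (y ⊗ₜ[k] a')

lemma L12 : S.m ∘ₗ TensorProduct.map S.jVC S.jC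
    = S.jVC ∘ₗ lTensor V (mul' k C) ∘ₗ α k V C C := by
  ext v c c'
  simp only [comp_apply, map_tmul, AlgebraTensorModule.curry_apply, curry_apply,
    coe_restrictScalars, LinearEquiv.coe_coe, assoc_tmul, lTensor_tmul, mul'_apply]
  rw [S.L14pt]
  simp [mulXC, mul'_apply, jVC, jVC_apply]

lemma L12pt (y : V ⊗[k] C) (c' : C) :
    S.m (S.jVC y ⊗ₜ[k] S.jC c')
      = S.jVC (lTensor V (mul' k C) (α k V C C (y ⊗ₜ[k] c'))) := by
  simpa using LinearMap.congr_fun S.L12 (y ⊗ₜ[k] c')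

lemma L13 : S.m ∘ₗ TensorProduct.map S.jAC S.jC
    = S.jAC ∘ₗ lTensor A (mul' k C) ∘ₗ α k A C C := by
  ext a c c'
  simp only [comp_apply, map_tmul, AlgebraTensorModule.curry_apply, curry_apply,
    coe_restrictScalars, LinearEquiv.coe_coe, assoc_tmul, lTensor_tmul, mul'_apply]
  rw [S.L14pt]
  simp [mulXC, mul'_apply, jAC, jAC_apply]

lemma L13pt (y : A ⊗[k] C) (c' : C) :
    S.m (S.jAC y ⊗ₜ[k] S.jC c')
      = S.jAC (lTensor A (mul' k C) (α k A C C (y ⊗ₜ[k] c'))) := by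
  simpa using LinearMap.congr_fun S.L13 (y ⊗ₜ[k] c')

lemma L19 : S.m ∘ₗ TensorProduct.map S.jV S.jAC = rTensor C S.R1 ∘ₗ α' k V A C := by
  ext v a c
  simp only [comp_apply, map_tmul, AlgebraTensorModule.curry_apply, curry_apply,
    coe_restrictScalars, LinearEquiv.coe_coe, assoc_symm_tmul, rTensor_tmul]
  conv_lhs => rw [← S.L6pt, ← S.hassoc, S.key1, S.L11pt]

lemma L19pt (v : V) (y : A ⊗[k] C) :
    S.m (S.jV v ⊗ₜ[k] S.jAC y) = rTensor C S.R1 (α' k V A C (v ⊗ₜ[k] y)) := by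
  simpa using LinearMap.congr_fun S.L19 (v ⊗ₜ[k] y)

lemma L18 : S.m ∘ₗ TensorProduct.map S.jVC S.jA
    = rTensor C S.R1 ∘ₗ α' k V A C ∘ₗ lTensor V S.R3 ∘ₗ α k V C A := by
  ext v c a
  simp only [comp_apply, map_tmul, AlgebraTensorModule.curry_apply, curry_apply,
    coe_restrictScalars, LinearEquiv.coe_coe, assoc_tmul, lTensor_tmul]
  conv_lhs => rw [← S.F1', S.hassoc, S.key3, S.L19pt]
  simp only [α', α, LinearEquiv.coe_coe]

lemma L18pt (y : V ⊗[k] C) (a : A) :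
    S.m (S.jVC y ⊗ₜ[k] S.jA a)
      = rTensor C S.R1 (α' k V A C (lTensor V S.R3 (α k V C A (y ⊗ₜ[k] a)))) := by
  simpa using LinearMap.congr_fun S.L18 (y ⊗ₜ[k] a)

lemma L16 : S.m ∘ₗ TensorProduct.map S.jAC S.jV
    = α' k A V C ∘ₗ lTensor A S.R2 ∘ₗ α k A C V := by
  ext a c v
  simp only [comp_apply, map_tmul, AlgebraTensorModule.curry_apply, curry_apply,
    coe_restrictScalars, LinearEquiv.coe_coe, assoc_tmul, lTensor_tmul]
  conv_lhs => rw [← S.L6pt, S.hassoc, S.key2, S.L8pt]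
  simp only [α', α, LinearEquiv.coe_coe]

lemma L16pt (y : A ⊗[k] C) (v : V) :
    S.m (S.jAC y ⊗ₜ[k] S.jV v)
      = α' k A V C (lTensor A S.R2 (α k A C V (y ⊗ₜ[k] v))) := by
  simpa using LinearMap.congr_fun S.L16 (y ⊗ₜ[k] v)

lemma L17 : S.m ∘ₗ TensorProduct.map S.jAC S.jA
    = S.jAC ∘ₗ rTensor C (mul' k A) ∘ₗ α' k A A C ∘ₗ lTensor A S.R3 ∘ₗ α k A C A := by
  ext a c a'
  simp only [comp_apply, map_tmul, AlgebraTensorModule.curry_apply, curry_apply,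
    coe_restrictScalars, LinearEquiv.coe_coe, assoc_tmul, lTensor_tmul]
  conv_lhs => rw [← S.L6pt, S.hassoc, S.key3, S.L9pt]
  simp only [α', α, LinearEquiv.coe_coe]

lemma L17pt (y : A ⊗[k] C) (a' : A) :
    S.m (S.jAC y ⊗ₜ[k] S.jA a')
      = S.jAC (rTensor C (mul' k A) (α' k A A C (lTensor A S.R3 (α k A C A (y ⊗ₜ[k] a'))))) := by
  simpa using LinearMap.congr_fun S.L17 (y ⊗ₜ[k] a')

lemma L22b : S.m ∘ₗ TensorProduct.map S.jC S.jAC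
    = S.jAC ∘ₗ lTensor A (mul' k C) ∘ₗ α k A C C ∘ₗ rTensor C S.R3 ∘ₗ α' k C A C := by
  ext c a c'
  simp only [comp_apply, map_tmul, AlgebraTensorModule.curry_apply, curry_apply,
    coe_restrictScalars, LinearEquiv.coe_coe, assoc_symm_tmul, rTensor_tmul]
  conv_lhs => rw [← S.L6pt, ← S.hassoc, S.key3, S.L13pt]
  simp only [α', α, LinearEquiv.coe_coe]

lemma L22bpt (c : C) (y : A ⊗[k] C) :
    S.m (S.jC c ⊗ₜ[k] S.jAC y)
      = S.jAC (lTensor A (mul' k C) (α k A C C (rTensor C S.R3 (α' k C A C (c ⊗ₜ[k] y))))) := by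
  simpa using LinearMap.congr_fun S.L22b (c ⊗ₜ[k] y)

lemma L21 : S.m ∘ₗ TensorProduct.map S.jAV S.jV
    = rTensor C (mulAV k A V) ∘ₗ α' k A (A ⊗[k] V) C ∘ₗ lTensor A S.Emap ∘ₗ α k A V V := by
  ext a v v'
  simp only [comp_apply, map_tmul, AlgebraTensorModule.curry_apply, curry_apply,
    coe_restrictScalars, LinearEquiv.coe_coe, assoc_tmul, lTensor_tmul]
  conv_lhs => rw [← S.F0 a v, S.hassoc, S.keyE, S.L10pt]
  simp only [α', α, LinearEquiv.coe_coe]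

lemma L21pt (x : A ⊗[k] V) (v' : V) :
    S.m (S.jAV x ⊗ₜ[k] S.jV v')
      = rTensor C (mulAV k A V)
          (α' k A (A ⊗[k] V) C (lTensor A S.Emap (α k A V V (x ⊗ₜ[k] v')))) := by
  simpa using LinearMap.congr_fun S.L21 (x ⊗ₜ[k] v')

lemma L20 : S.m ∘ₗ TensorProduct.map S.jV S.jAV
    = rTensor C (mulAV k A V) ∘ₗ α' k A (A ⊗[k] V) C ∘ₗ lTensor A S.Emap ∘ₗ α k A V V
      ∘ₗ rTensor V S.R1 ∘ₗ α' k V A V := by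
  ext v a v'
  simp only [comp_apply, map_tmul, AlgebraTensorModule.curry_apply, curry_apply,
    coe_restrictScalars, LinearEquiv.coe_coe, assoc_symm_tmul, rTensor_tmul]
  conv_lhs => rw [← S.F0 a v', ← S.hassoc, S.key1, S.L21pt]
  simp only [α', α, LinearEquiv.coe_coe]

lemma L20pt (v : V) (y : A ⊗[k] V) :
    S.m (S.jV v ⊗ₜ[k] S.jAV y)
      = rTensor C (mulAV k A V)
          (α' k A (A ⊗[k] V) C (lTensor A S.Emap (α k A V V
            (rTensor V S.R1 (α' k V A V (v ⊗ₜ[k] y)))))) := by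
  simpa using LinearMap.congr_fun S.L20 (v ⊗ₜ[k] y)

lemma L23 : S.m ∘ₗ TensorProduct.map S.jC S.jVC
    = S.jVC ∘ₗ lTensor V (mul' k C) ∘ₗ α k V C C ∘ₗ rTensor C S.R2 ∘ₗ α' k C V C := by
  ext c v c'
  simp only [comp_apply, map_tmul, AlgebraTensorModule.curry_apply, curry_apply,
    coe_restrictScalars, LinearEquiv.coe_coe, assoc_symm_tmul, rTensor_tmul]
  conv_lhs => rw [← S.F1', ← S.hassoc, S.key2, S.L12pt]
  simp only [α', α, LinearEquiv.coe_coe]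

lemma L23pt (c : C) (y : V ⊗[k] C) :
    S.m (S.jC c ⊗ₜ[k] S.jVC y)
      = S.jVC (lTensor V (mul' k C) (α k V C C (rTensor C S.R2 (α' k C V C (c ⊗ₜ[k] y))))) := by
  simpa using LinearMap.congr_fun S.L23 (c ⊗ₜ[k] y)

lemma L25 : S.m ∘ₗ TensorProduct.map S.jV S.jVC
    = mulXC k (A ⊗[k] V) C ∘ₗ rTensor C S.Emap ∘ₗ α' k V V C := by
  ext v v' c
  simp only [comp_apply, map_tmul, AlgebraTensorModule.curry_apply, curry_apply,
    coe_restrictScalars, LinearEquiv.coe_coe, assoc_symm_tmul, rTensor_tmul]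
  conv_lhs => rw [← S.F1', ← S.hassoc, S.keyE]
  rw [S.L14pt]

lemma L25pt (v : V) (y : V ⊗[k] C) :
    S.m (S.jV v ⊗ₜ[k] S.jVC y)
      = mulXC k (A ⊗[k] V) C (rTensor C S.Emap (α' k V V C (v ⊗ₜ[k] y))) := by
  simpa using LinearMap.congr_fun S.L25 (v ⊗ₜ[k] y)

lemma L24 : S.m ∘ₗ TensorProduct.map S.jVC S.jV
    = mulXC k (A ⊗[k] V) C ∘ₗ rTensor C S.Emap ∘ₗ α' k V V C
      ∘ₗ lTensor V S.R2 ∘ₗ α k V C V := by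
  ext v c v'
  simp only [comp_apply, map_tmul, AlgebraTensorModule.curry_apply, curry_apply,
    coe_restrictScalars, LinearEquiv.coe_coe, assoc_tmul, lTensor_tmul]
  conv_lhs => rw [← S.F1', S.hassoc, S.key2, S.L25pt]
  simp only [α', LinearEquiv.coe_coe]

lemma L24pt (y : V ⊗[k] C) (v' : V) :
    S.m (S.jVC y ⊗ₜ[k] S.jV v')
      = mulXC k (A ⊗[k] V) C (rTensor C S.Emap (α' k V V C
          (lTensor V S.R2 (α k V C V (y ⊗ₜ[k] v'))))) := by
  simpa using LinearMap.congr_fun S.L24 (y ⊗ₜ[k] v')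


lemma L27 : S.m ∘ₗ TensorProduct.map S.jAV S.jAC
    = rTensor C (mulAV k A V) ∘ₗ rTensor C (lTensor A S.R1) ∘ₗ rTensor C (α k A V A)
      ∘ₗ α' k (A ⊗[k] V) A C := by
  ext a v a' c
  simp only [comp_apply, map_tmul, AlgebraTensorModule.curry_apply, curry_apply,
    coe_restrictScalars, LinearEquiv.coe_coe, assoc_symm_tmul, rTensor_tmul,
    assoc_tmul, lTensor_tmul]
  conv_lhs => rw [← S.L6pt, ← S.hassoc, S.L15pt, S.L11pt]
  simp only [α, α', LinearEquiv.coe_coe, assoc_tmul, assoc_symm_tmul, lTensor_tmul,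
    rTensor_tmul]

lemma L27pt (x : A ⊗[k] V) (y : A ⊗[k] C) :
    S.m (S.jAV x ⊗ₜ[k] S.jAC y)
      = rTensor C (mulAV k A V) (rTensor C (lTensor A S.R1) (rTensor C (α k A V A)
          (α' k (A ⊗[k] V) A C (x ⊗ₜ[k] y)))) := by
  simpa using LinearMap.congr_fun S.L27 (x ⊗ₜ[k] y)

lemma L26 : S.m ∘ₗ TensorProduct.map (LinearMap.id) S.jA
    = rTensor C (mulAV k A V) ∘ₗ rTensor C (lTensor A S.R1) ∘ₗ rTensor C (α k A V A)
      ∘ₗ α' k (A ⊗[k] V) A C ∘ₗ lTensor (A ⊗[k] V) S.R3 ∘ₗ α k (A ⊗[k] V) C A := by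
  ext a v c a'
  simp only [comp_apply, map_tmul, id_coe, id_eq, AlgebraTensorModule.curry_apply,
    curry_apply, coe_restrictScalars, LinearEquiv.coe_coe, assoc_tmul, lTensor_tmul]
  conv_lhs => rw [← S.F1 a v c, S.hassoc, S.key3, S.L27pt]
  simp only [α, α', LinearEquiv.coe_coe, assoc_tmul, assoc_symm_tmul, lTensor_tmul,
    rTensor_tmul]

lemma L26pt (t : (A ⊗[k] V) ⊗[k] C) (a' : A) :
    S.m (t ⊗ₜ[k] S.jA a')
      = rTensor C (mulAV k A V) (rTensor C (lTensor A S.R1) (rTensor C (α k A V A)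
          (α' k (A ⊗[k] V) A C (lTensor (A ⊗[k] V) S.R3 (α k (A ⊗[k] V) C A
            (t ⊗ₜ[k] a')))))) := by
  simpa using LinearMap.congr_fun S.L26 (t ⊗ₜ[k] a')

lemma L22 : S.m ∘ₗ TensorProduct.map S.jC S.jAV = tsP k A V C S.R2 S.R3 := by
  ext c a v
  simp only [comp_apply, map_tmul, AlgebraTensorModule.curry_apply, curry_apply,
    coe_restrictScalars]
  conv_lhs => rw [← S.F0, ← S.hassoc, S.key3, S.L16pt]
  simp only [tsP, comp_apply, α, α', LinearEquiv.coe_coe, assoc_tmul, assoc_symm_tmul,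
    lTensor_tmul, rTensor_tmul]

lemma L22pt (c : C) (x : A ⊗[k] V) :
    S.m (S.jC c ⊗ₜ[k] S.jAV x) = tsP k A V C S.R2 S.R3 (c ⊗ₜ[k] x) := by
  simpa using LinearMap.congr_fun S.L22 (c ⊗ₜ[k] x)

lemma L28M : S.m ∘ₗ TensorProduct.map S.jC (LinearMap.id)
    = mulXC k (A ⊗[k] V) C ∘ₗ rTensor C (tsP k A V C S.R2 S.R3)
      ∘ₗ α' k C (A ⊗[k] V) C := by
  ext c a v c'
  simp only [comp_apply, map_tmul, id_coe, id_eq, AlgebraTensorModule.curry_apply,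
    curry_apply, coe_restrictScalars, LinearEquiv.coe_coe, assoc_symm_tmul, rTensor_tmul]
  conv_lhs => rw [← S.F1 a v c', ← S.hassoc, S.L22pt, S.L14pt]

lemma L28Mpt (c : C) (t : (A ⊗[k] V) ⊗[k] C) :
    S.m (S.jC c ⊗ₜ[k] t)
      = mulXC k (A ⊗[k] V) C (rTensor C (tsP k A V C S.R2 S.R3)
          (α' k C (A ⊗[k] V) C (c ⊗ₜ[k] t))) := by
  simpa using LinearMap.congr_fun S.L28M (c ⊗ₜ[k] t)

lemma M2 : S.m ∘ₗ TensorProduct.map S.jAV S.jAV = tsNu k A V C S.R1 S.Emap := by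
  ext a v a' v'
  simp only [comp_apply, map_tmul, AlgebraTensorModule.curry_apply, curry_apply,
    coe_restrictScalars]
  conv_lhs => rw [← S.F0 a v, S.hassoc, S.L20pt, S.L10pt]
  simp only [tsNu, comp_apply, α, α', LinearEquiv.coe_coe, assoc_tmul, assoc_symm_tmul,
    lTensor_tmul, rTensor_tmul]

lemma M2pt (x y : A ⊗[k] V) :
    S.m (S.jAV x ⊗ₜ[k] S.jAV y) = tsNu k A V C S.R1 S.Emap (x ⊗ₜ[k] y) := by
  simpa using LinearMap.congr_fun S.M2 (x ⊗ₜ[k] y)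

lemma L32M : S.m ∘ₗ TensorProduct.map S.jAV (LinearMap.id)
    = mulXC k (A ⊗[k] V) C ∘ₗ rTensor C (tsNu k A V C S.R1 S.Emap)
      ∘ₗ α' k (A ⊗[k] V) (A ⊗[k] V) C := by
  ext a v a' v' c'
  simp only [comp_apply, map_tmul, id_coe, id_eq, AlgebraTensorModule.curry_apply,
    curry_apply, coe_restrictScalars, LinearEquiv.coe_coe, assoc_symm_tmul, rTensor_tmul]
  conv_lhs => rw [← S.F1 a' v' c', ← S.hassoc, S.M2pt, S.L14pt]

lemma L32Mpt (x : A ⊗[k] V) (t : (A ⊗[k] V) ⊗[k] C) :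
    S.m (S.jAV x ⊗ₜ[k] t)
      = mulXC k (A ⊗[k] V) C (rTensor C (tsNu k A V C S.R1 S.Emap)
          (α' k (A ⊗[k] V) (A ⊗[k] V) C (x ⊗ₜ[k] t))) := by
  simpa using LinearMap.congr_fun S.L32M (x ⊗ₜ[k] t)

lemma L31 : S.m ∘ₗ TensorProduct.map S.jAV S.jVC
    = tsTail k A V C ∘ₗ rTensor C (lTensor A S.Emap) ∘ₗ rTensor C (α k A V V)
      ∘ₗ α' k (A ⊗[k] V) V C := by
  ext a v v' c
  simp only [comp_apply, map_tmul, AlgebraTensorModule.curry_apply, curry_apply,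
    coe_restrictScalars, LinearEquiv.coe_coe, assoc_symm_tmul, rTensor_tmul,
    assoc_tmul, lTensor_tmul]
  conv_lhs => rw [← S.F1', ← S.hassoc, S.L21pt, S.L14pt]
  simp only [tsTail, comp_apply, α, α', LinearEquiv.coe_coe, assoc_tmul, assoc_symm_tmul,
    lTensor_tmul, rTensor_tmul]

lemma L31pt (x : A ⊗[k] V) (y : V ⊗[k] C) :
    S.m (S.jAV x ⊗ₜ[k] S.jVC y)
      = tsTail k A V C (rTensor C (lTensor A S.Emap) (rTensor C (α k A V V)
          (α' k (A ⊗[k] V) V C (x ⊗ₜ[k] y)))) := by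
  simpa using LinearMap.congr_fun S.L31 (x ⊗ₜ[k] y)

lemma L30 : S.m ∘ₗ TensorProduct.map (LinearMap.id) S.jV
    = tsTail k A V C ∘ₗ rTensor C (lTensor A S.Emap) ∘ₗ rTensor C (α k A V V)
      ∘ₗ α' k (A ⊗[k] V) V C ∘ₗ lTensor (A ⊗[k] V) S.R2 ∘ₗ α k (A ⊗[k] V) C V := by
  ext a v c v'
  simp only [comp_apply, map_tmul, id_coe, id_eq, AlgebraTensorModule.curry_apply,
    curry_apply, coe_restrictScalars, LinearEquiv.coe_coe, assoc_tmul, lTensor_tmul]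
  conv_lhs => rw [← S.F1 a v c, S.hassoc, S.key2, S.L31pt]
  simp only [α, α', LinearEquiv.coe_coe, assoc_tmul, assoc_symm_tmul, lTensor_tmul,
    rTensor_tmul]

lemma L30pt (t : (A ⊗[k] V) ⊗[k] C) (v' : V) :
    S.m (t ⊗ₜ[k] S.jV v')
      = tsTail k A V C (rTensor C (lTensor A S.Emap) (rTensor C (α k A V V)
          (α' k (A ⊗[k] V) V C (lTensor (A ⊗[k] V) S.R2 (α k (A ⊗[k] V) C V
            (t ⊗ₜ[k] v')))))) := by
  simpa using LinearMap.congr_fun S.L30 (t ⊗ₜ[k] v')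

lemma L29 : S.m ∘ₗ TensorProduct.map S.jV (LinearMap.id)
    = tsTail k A V C ∘ₗ rTensor C (lTensor A S.Emap) ∘ₗ rTensor C (α k A V V)
      ∘ₗ rTensor C (rTensor V S.R1) ∘ₗ rTensor C (α' k V A V)
      ∘ₗ α' k V (A ⊗[k] V) C := by
  ext v a v' c
  simp only [comp_apply, map_tmul, id_coe, id_eq, AlgebraTensorModule.curry_apply,
    curry_apply, coe_restrictScalars, LinearEquiv.coe_coe, assoc_symm_tmul, rTensor_tmul]
  conv_lhs => rw [← S.F1 a v' c, ← S.hassoc, S.L20pt, S.L14pt]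
  simp only [tsTail, comp_apply, α, α', LinearEquiv.coe_coe, assoc_tmul, assoc_symm_tmul,
    lTensor_tmul, rTensor_tmul]

lemma L29pt (v : V) (t : (A ⊗[k] V) ⊗[k] C) :
    S.m (S.jV v ⊗ₜ[k] t)
      = tsTail k A V C (rTensor C (lTensor A S.Emap) (rTensor C (α k A V V)
          (rTensor C (rTensor V S.R1) (rTensor C (α' k V A V)
            (α' k V (A ⊗[k] V) C (v ⊗ₜ[k] t)))))) := by
  simpa using LinearMap.congr_fun S.L29 (v ⊗ₜ[k] t)

lemma r1a (a : A) : S.R1 (S.e ⊗ₜ[k] a) = a ⊗ₜ[k] S.e := by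
  rw [R1, comp_apply, comp_apply, map_tmul,
    show S.jV S.e = ((1:A) ⊗ₜ[k] S.e) ⊗ₜ[k] (1:C) from rfl, S.hul]
  simp [sC, jA, S.hπC]

lemma r1b (v : V) : S.R1 (v ⊗ₜ[k] (1:A)) = (1:A) ⊗ₜ[k] v := by
  rw [R1, comp_apply, comp_apply, map_tmul,
    show S.jA (1:A) = ((1:A) ⊗ₜ[k] S.e) ⊗ₜ[k] (1:C) from rfl, S.hur]
  simp [sC, jV, S.hπC]

lemma r2a (c : C) : S.R2 (c ⊗ₜ[k] S.e) = S.e ⊗ₜ[k] c := by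
  rw [R2, comp_apply, comp_apply, map_tmul,
    show S.jV S.e = ((1:A) ⊗ₜ[k] S.e) ⊗ₜ[k] (1:C) from rfl, S.hur]
  simp [sA, stripA, jC, S.hπA]

lemma r2b (v : V) : S.R2 ((1:C) ⊗ₜ[k] v) = v ⊗ₜ[k] (1:C) := by
  rw [R2, comp_apply, comp_apply, map_tmul,
    show S.jC (1:C) = ((1:A) ⊗ₜ[k] S.e) ⊗ₜ[k] (1:C) from rfl, S.hul]
  simp [sA, stripA, jV, S.hπA]

lemma ea (v : V) : S.Emap (S.e ⊗ₜ[k] v) = ((1:A) ⊗ₜ[k] v) ⊗ₜ[k] (1:C) := by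
  rw [Emap, comp_apply, map_tmul,
    show S.jV S.e = ((1:A) ⊗ₜ[k] S.e) ⊗ₜ[k] (1:C) from rfl, S.hul]
  rfl

lemma eb (v : V) : S.Emap (v ⊗ₜ[k] S.e) = ((1:A) ⊗ₜ[k] v) ⊗ₜ[k] (1:C) := by
  rw [Emap, comp_apply, map_tmul,
    show S.jV S.e = ((1:A) ⊗ₜ[k] S.e) ⊗ₜ[k] (1:C) from rfl, S.hur]
  rfl

lemma twistUL (a : A) : S.R3 ((1:C) ⊗ₜ[k] a) = a ⊗ₜ[k] (1:C) := by
  rw [R3, comp_apply, comp_apply, map_tmul,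
    show S.jC (1:C) = ((1:A) ⊗ₜ[k] S.e) ⊗ₜ[k] (1:C) from rfl, S.hul]
  simp [sV, stripV, jA, S.hπV]

lemma twistUR (c : C) : S.R3 (c ⊗ₜ[k] (1:A)) = (1:A) ⊗ₜ[k] c := by
  rw [R3, comp_apply, comp_apply, map_tmul,
    show S.jA (1:A) = ((1:A) ⊗ₜ[k] S.e) ⊗ₜ[k] (1:C) from rfl, S.hur]
  simp [sV, stripV, jC, S.hπV]

lemma twistML : S.R3 ∘ₗ lTensor C (mul' k A) ∘ₗ α k C A A
    = rTensor C (mul' k A) ∘ₗ α' k A A C ∘ₗ lTensor A S.R3 ∘ₗ α k A C A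
      ∘ₗ rTensor A S.R3 := by
  ext c a a'
  apply S.jAC_inj
  simp only [comp_apply, AlgebraTensorModule.curry_apply, curry_apply,
    coe_restrictScalars, LinearEquiv.coe_coe, assoc_tmul, lTensor_tmul, mul'_apply,
    rTensor_tmul, map_add]
  conv_lhs => rw [← S.key3, ← S.halgA', ← S.hassoc, S.key3, S.L17pt]
  simp only [map_tmul, α, α', LinearEquiv.coe_coe, assoc_tmul, assoc_symm_tmul,
    lTensor_tmul, rTensor_tmul, mul'_apply]

lemma twistMR : S.R3 ∘ₗ rTensor A (mul' k C)
    = lTensor A (mul' k C) ∘ₗ α k A C C ∘ₗ rTensor C S.R3 ∘ₗ α' k C A C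
      ∘ₗ lTensor C S.R3 ∘ₗ α k C C A := by
  ext c c' a
  apply S.jAC_inj
  simp only [comp_apply, AlgebraTensorModule.curry_apply, curry_apply,
    coe_restrictScalars, LinearEquiv.coe_coe, assoc_tmul, lTensor_tmul, mul'_apply,
    rTensor_tmul]
  conv_lhs => rw [← S.key3, ← S.halgC', S.hassoc, S.key3, S.L22bpt]
  simp only [α, α', LinearEquiv.coe_coe, assoc_tmul, assoc_symm_tmul,
    lTensor_tmul, rTensor_tmul, mul'_apply]

lemma eq1 : S.R1 ∘ₗ lTensor V (mul' k A) ∘ₗ α k V A A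
    = rTensor V (mul' k A) ∘ₗ α' k A A V ∘ₗ lTensor A S.R1 ∘ₗ α k A V A
      ∘ₗ rTensor A S.R1 := by
  ext v a a'
  apply S.jAV_inj
  simp only [comp_apply, AlgebraTensorModule.curry_apply, curry_apply,
    coe_restrictScalars, LinearEquiv.coe_coe, assoc_tmul, lTensor_tmul, mul'_apply,
    rTensor_tmul]
  conv_lhs => rw [← S.key1, ← S.halgA', ← S.hassoc, S.key1, S.L15pt]
  simp only [mulAV, comp_apply, α, α', LinearEquiv.coe_coe, assoc_tmul, assoc_symm_tmul,
    lTensor_tmul, rTensor_tmul, mul'_apply]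

lemma eq2 : S.R2 ∘ₗ rTensor V (mul' k C)
    = lTensor V (mul' k C) ∘ₗ α k V C C ∘ₗ rTensor C S.R2 ∘ₗ α' k C V C
      ∘ₗ lTensor C S.R2 ∘ₗ α k C C V := by
  ext c c' v
  apply S.jVC_inj
  simp only [comp_apply, AlgebraTensorModule.curry_apply, curry_apply,
    coe_restrictScalars, LinearEquiv.coe_coe, assoc_tmul, lTensor_tmul, mul'_apply,
    rTensor_tmul]
  conv_lhs => rw [← S.key2, ← S.halgC', S.hassoc, S.key2, S.L23pt]
  simp only [α, α', LinearEquiv.coe_coe, assoc_tmul, assoc_symm_tmul,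
    lTensor_tmul, rTensor_tmul, mul'_apply]

lemma eq3 : lTensor A S.R2 ∘ₗ α k A C V ∘ₗ rTensor V S.R3 ∘ₗ α' k C A V
      ∘ₗ lTensor C S.R1
    = α k A V C ∘ₗ rTensor C S.R1 ∘ₗ α' k V A C ∘ₗ lTensor V S.R3 ∘ₗ α k V C A
      ∘ₗ rTensor A S.R2 ∘ₗ α' k C V A := by
  ext c v a
  apply (TensorProduct.assoc k A V C).symm.injective
  have h1 := S.L22pt c (S.R1 (v ⊗ₜ[k] a))
  have h2 := S.L18pt (S.R2 (c ⊗ₜ[k] v)) a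
  simp only [tsP, comp_apply, α, α', LinearEquiv.coe_coe] at h1 h2
  simp only [comp_apply, AlgebraTensorModule.curry_apply, curry_apply,
    coe_restrictScalars, LinearEquiv.coe_coe, assoc_tmul, assoc_symm_tmul, lTensor_tmul,
    rTensor_tmul, LinearEquiv.symm_apply_apply]
  rw [← h1, ← h2, ← S.key1, ← S.key2, S.hassoc]

lemma eq4 : rTensor C (mulAV k A V) ∘ₗ α' k A (A ⊗[k] V) C ∘ₗ lTensor A S.Emap
      ∘ₗ α k A V V ∘ₗ rTensor V S.R1 ∘ₗ α' k V A V ∘ₗ lTensor V S.R1 ∘ₗ α k V V A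
    = rTensor C (mulAV k A V) ∘ₗ rTensor C (lTensor A S.R1) ∘ₗ rTensor C (α k A V A)
      ∘ₗ α' k (A ⊗[k] V) A C ∘ₗ lTensor (A ⊗[k] V) S.R3 ∘ₗ α k (A ⊗[k] V) C A
      ∘ₗ rTensor A S.Emap := by
  ext v v' a
  have h1 := S.L20pt v (S.R1 (v' ⊗ₜ[k] a))
  have h2 := S.L26pt (S.Emap (v ⊗ₜ[k] v')) a
  simp only [comp_apply, α, α', LinearEquiv.coe_coe] at h1 h2
  simp only [comp_apply, AlgebraTensorModule.curry_apply, curry_apply,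
    coe_restrictScalars, LinearEquiv.coe_coe, assoc_tmul, assoc_symm_tmul, lTensor_tmul,
    rTensor_tmul]
  rw [← h1, ← h2, ← S.key1, ← S.keyE, S.hassoc]

lemma eq5 : mulXC k (A ⊗[k] V) C ∘ₗ rTensor C S.Emap ∘ₗ α' k V V C
      ∘ₗ lTensor V S.R2 ∘ₗ α k V C V ∘ₗ rTensor V S.R2
    = mulXC k (A ⊗[k] V) C ∘ₗ rTensor C (α' k A V C) ∘ₗ rTensor C (lTensor A S.R2)
      ∘ₗ rTensor C (α k A C V) ∘ₗ rTensor C (rTensor V S.R3) ∘ₗ rTensor C (α' k C A V)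
      ∘ₗ α' k C (A ⊗[k] V) C ∘ₗ lTensor C S.Emap ∘ₗ α k C V V := by
  ext c v v'
  have h1 := S.L24pt (S.R2 (c ⊗ₜ[k] v)) v'
  have h2 := S.L28Mpt c (S.Emap (v ⊗ₜ[k] v'))
  simp only [tsP, LinearMap.rTensor_comp, comp_apply, α, α', LinearEquiv.coe_coe] at h1 h2
  simp only [comp_apply, AlgebraTensorModule.curry_apply, curry_apply,
    coe_restrictScalars, LinearEquiv.coe_coe, assoc_tmul, assoc_symm_tmul, lTensor_tmul,
    rTensor_tmul]
  rw [← h1, ← h2, ← S.key2, ← S.keyE, S.hassoc]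

lemma eq6 : tsTail k A V C ∘ₗ rTensor C (lTensor A S.Emap) ∘ₗ rTensor C (α k A V V)
      ∘ₗ rTensor C (rTensor V S.R1) ∘ₗ rTensor C (α' k V A V)
      ∘ₗ α' k V (A ⊗[k] V) C ∘ₗ lTensor V S.Emap ∘ₗ α k V V V
    = tsTail k A V C ∘ₗ rTensor C (lTensor A S.Emap) ∘ₗ rTensor C (α k A V V)
      ∘ₗ α' k (A ⊗[k] V) V C ∘ₗ lTensor (A ⊗[k] V) S.R2 ∘ₗ α k (A ⊗[k] V) C V
      ∘ₗ rTensor V S.Emap := by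
  ext v v' v''
  have h1 := S.L29pt v (S.Emap (v' ⊗ₜ[k] v''))
  have h2 := S.L30pt (S.Emap (v ⊗ₜ[k] v')) v''
  simp only [comp_apply, α, α', LinearEquiv.coe_coe] at h1 h2
  simp only [comp_apply, AlgebraTensorModule.curry_apply, curry_apply,
    coe_restrictScalars, LinearEquiv.coe_coe, assoc_tmul, assoc_symm_tmul, lTensor_tmul,
    rTensor_tmul]
  rw [← h1, ← h2, ← S.keyE, ← S.keyE, ← S.hassoc]

lemma mulEq : S.m = tsMul k A V C S.R1 S.R2 S.R3 S.Emap := by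
  ext a v c a' v' c'
  simp only [AlgebraTensorModule.curry_apply, curry_apply, coe_restrictScalars]
  conv_lhs => rw [← S.F1 a v c, S.hassoc, S.L28Mpt, S.L32Mpt]
  simp only [tsMul, mulXC, comp_apply, α, α', LinearEquiv.coe_coe, assoc_tmul,
    assoc_symm_tmul, lTensor_tmul, rTensor_tmul]

end Setup

end Converse

/-- converse, Theorem 2.2 of the paper: any associative unital algebra
structure on `A ⊗ V ⊗ C` with unit `1_A ⊗ 1_V ⊗ 1_C` for which `a ↦ a ⊗ 1_V ⊗ 1_C` and
`c ↦ 1_A ⊗ 1_V ⊗ c` are algebra maps, satisfying the range conditions (ajut1)-(ajut3)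
and the factorization `a ⊗ v ⊗ c = (a ⊗ 1_V ⊗ 1_C)·(1_A ⊗ v ⊗ 1_C)·(1_A ⊗ 1_V ⊗ c)`,
is a two-sided crossed product for suitable `R1, R2, R3, E`. -/
theorem converse_two_sided_crossed_product
    (A V C : Type*) [Ring A] [Algebra k A] [AddCommGroup V] [Module k V]
    [Ring C] [Algebra k C] (e : V) (he : e ≠ 0)
    (m : ((A ⊗[k] V) ⊗[k] C) ⊗[k] ((A ⊗[k] V) ⊗[k] C) →ₗ[k] (A ⊗[k] V) ⊗[k] C)
    (hul : ∀ x, m ((((1 : A) ⊗ₜ[k] e) ⊗ₜ[k] (1 : C)) ⊗ₜ[k] x) = x)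
    (hur : ∀ x, m (x ⊗ₜ[k] (((1 : A) ⊗ₜ[k] e) ⊗ₜ[k] (1 : C))) = x)
    (hassoc : ∀ x y z, m (m (x ⊗ₜ[k] y) ⊗ₜ[k] z) = m (x ⊗ₜ[k] m (y ⊗ₜ[k] z)))
    (halgA : ∀ a a' : A,
      m (((a ⊗ₜ[k] e) ⊗ₜ[k] (1 : C)) ⊗ₜ[k] ((a' ⊗ₜ[k] e) ⊗ₜ[k] (1 : C)))
        = ((a * a') ⊗ₜ[k] e) ⊗ₜ[k] (1 : C))
    (halgC : ∀ c c' : C,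
      m ((((1 : A) ⊗ₜ[k] e) ⊗ₜ[k] c) ⊗ₜ[k] (((1 : A) ⊗ₜ[k] e) ⊗ₜ[k] c'))
        = ((1 : A) ⊗ₜ[k] e) ⊗ₜ[k] (c * c'))
    (hmem1 : ∀ (v : V) (a' : A),
      m ((((1 : A) ⊗ₜ[k] v) ⊗ₜ[k] (1 : C)) ⊗ₜ[k] ((a' ⊗ₜ[k] e) ⊗ₜ[k] (1 : C)))
        ∈ LinearMap.range ((TensorProduct.mk k (A ⊗[k] V) C).flip (1 : C)))
    (hmem2 : ∀ (c : C) (v' : V),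
      m ((((1 : A) ⊗ₜ[k] e) ⊗ₜ[k] c) ⊗ₜ[k] (((1 : A) ⊗ₜ[k] v') ⊗ₜ[k] (1 : C)))
        ∈ LinearMap.range (rTensor C (TensorProduct.mk k A V (1 : A))))
    (hmem3 : ∀ (c : C) (a' : A),
      m ((((1 : A) ⊗ₜ[k] e) ⊗ₜ[k] c) ⊗ₜ[k] ((a' ⊗ₜ[k] e) ⊗ₜ[k] (1 : C)))
        ∈ LinearMap.range (rTensor C ((TensorProduct.mk k A V).flip e)))
    (hfact : ∀ (a : A) (v : V) (c : C),
      m (m (((a ⊗ₜ[k] e) ⊗ₜ[k] (1 : C)) ⊗ₜ[k] (((1 : A) ⊗ₜ[k] v) ⊗ₜ[k] (1 : C)))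
          ⊗ₜ[k] (((1 : A) ⊗ₜ[k] e) ⊗ₜ[k] c)) = (a ⊗ₜ[k] v) ⊗ₜ[k] c) :
    ∃ (R1 : V ⊗[k] A →ₗ[k] A ⊗[k] V) (R2 : C ⊗[k] V →ₗ[k] V ⊗[k] C)
      (R3 : C ⊗[k] A →ₗ[k] A ⊗[k] C) (E : V ⊗[k] V →ₗ[k] (A ⊗[k] V) ⊗[k] C),
      IsTwoSidedData k A V C e R1 R2 R3 E ∧ m = tsMul k A V C R1 R2 R3 E := by
  by_cases hC1 : (1 : C) = 0
  · haveI : Subsingleton C := subsingleton_of_zero_eq_one hC1.symm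
    refine ⟨(TensorProduct.comm k V A).toLinearMap, 0, 0, 0,
      ⟨⟨fun a => Subsingleton.elim _ _, fun b => Subsingleton.elim _ _,
        LinearMap.ext fun x => Subsingleton.elim _ _,
        LinearMap.ext fun x => Subsingleton.elim _ _⟩,
        fun a => by simp, fun v => by simp,
        fun c => Subsingleton.elim _ _, fun v => Subsingleton.elim _ _,
        fun v => Subsingleton.elim _ _, fun v => Subsingleton.elim _ _,
        ?_,
        LinearMap.ext fun x => Subsingleton.elim _ _,
        LinearMap.ext fun x => Subsingleton.elim _ _,
        LinearMap.ext fun x => Subsingleton.elim _ _,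
        LinearMap.ext fun x => Subsingleton.elim _ _,
        LinearMap.ext fun x => Subsingleton.elim _ _⟩,
      LinearMap.ext fun x => Subsingleton.elim _ _⟩
    ext v a a'
    simp [mul'_apply]
  by_cases hA1 : (1 : A) = 0
  · haveI : Subsingleton A := subsingleton_of_zero_eq_one hA1.symm
    refine ⟨0, (TensorProduct.comm k C V).toLinearMap, 0, 0,
      ⟨⟨fun a => Subsingleton.elim _ _, fun b => Subsingleton.elim _ _,
        LinearMap.ext fun x => Subsingleton.elim _ _,
        LinearMap.ext fun x => Subsingleton.elim _ _⟩,
        fun a => Subsingleton.elim _ _, fun v => Subsingleton.elim _ _,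
        fun c => by simp, fun v => by simp,
        fun v => Subsingleton.elim _ _, fun v => Subsingleton.elim _ _,
        LinearMap.ext fun x => Subsingleton.elim _ _,
        ?_,
        LinearMap.ext fun x => Subsingleton.elim _ _,
        LinearMap.ext fun x => Subsingleton.elim _ _,
        LinearMap.ext fun x => Subsingleton.elim _ _,
        LinearMap.ext fun x => Subsingleton.elim _ _⟩,
      LinearMap.ext fun x => Subsingleton.elim _ _⟩
    ext c c' v
    simp [mul'_apply]
  obtain ⟨pA, hpA⟩ := exists_dual_one k (1 : A) hA1
  obtain ⟨pC, hpC⟩ := exists_dual_one k (1 : C) hC1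
  obtain ⟨pV, hpV⟩ := exists_dual_one k e he
  set S : Setup k A V C :=
    { e := e, πA := pA, hπA := hpA, πC := pC, hπC := hpC, πV := pV, hπV := hpV,
      m := m, hul := hul, hur := hur, hassoc := hassoc, halgA := halgA, halgC := halgC,
      hmem1 := hmem1, hmem2 := hmem2, hmem3 := hmem3, hfact := hfact }
  exact ⟨S.R1, S.R2, S.R3, S.Emap,
    ⟨⟨S.twistUL, S.twistUR, S.twistML, S.twistMR⟩, S.r1a, S.r1b, S.r2a, S.r2b,
      S.ea, S.eb, S.eq1, S.eq2, S.eq3, S.eq4, S.eq5, S.eq6⟩, S.mulEq⟩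


end TwoSidedCP
end
end
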